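/- arXiv:math/0702495 — 5 statements merged into one kernel-verified Lean document; each statement's English description precedes it below -/
import Mathlib

section
/- Every orientation preserving homeomorphism f of the real line can be written as f = g ∘ h, where g and h are orientation preserving homeomorphisms of ℝ, each of which is reversible in H⁺(ℝ); that is, there exist strictly increasing homeomorphisms k₁ and k₂ of ℝ with k₁ ∘ g ∘ k₁⁻¹ = g⁻¹ and k₂ ∘ h ∘ k₂⁻¹ = h⁻¹. (In other words, H⁺(ℝ) = R₂(H⁺(ℝ)).) -/
/-
A homeomorphism `g` whose graph crosses the diagonal alternately upwards and downwards at a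
bi-infinite sequence of fixed points `c j` is reversible in `H⁺(ℝ)`: `g` on `(c j, c (j + 1))` and
`g⁻¹` on `(c (j + 1), c (j + 2))` are fixed-point free and push points the same way, hence are
conjugate (through a fundamental domain), and these conjugacies glue to a reverser.

Given `f`, glue the maps `x ↦ f x + x - p`, which cross both `f` and the identity exactly once and
upwards, alternately with inverses of `x ↦ f⁻¹ x + x - p`, which cross both exactly once and
downwards, along a fast-growing sequence of parameters `p`. The result `g` crosses both the
identity and `f` alternately. Then `h = g⁻¹ f` crosses the identity alternately, as
`h x < x ↔ f x < g x`, so `f = g h` with `g` and `h` reversible.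
-/

/-- `f` is a homeomorphism of `ℝ`: a bijection of `ℝ` that is continuous in both directions. -/
def IsHomeo (f : Equiv.Perm ℝ) : Prop := Continuous f ∧ Continuous f.symm

open Set Filter Function

section Orbit

variable {α : Type*} [ConditionallyCompleteLinearOrder α] [TopologicalSpace α] [OrderTopology α]
  {φ : α → α}

theorem exists_lt_iterate (hφ : Continuous φ) {x₀ b y : α} (hlt : ∀ x ∈ Ico x₀ b, x < φ x)
    (hy : y < b) : ∃ n, y < φ^[n] x₀ := by
  by_contra! hle
  have hge : ∀ n, x₀ ≤ φ^[n] x₀ := by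
    intro n
    induction n with
    | zero => exact le_rfl
    | succ n ih =>
      rw [iterate_succ_apply']
      exact ih.trans (hlt _ ⟨ih, (hle n).trans_lt hy⟩).le
  have hmono : Monotone fun n => φ^[n] x₀ := monotone_nat_of_le_succ fun n => by
    rw [iterate_succ_apply']
    exact (hlt _ ⟨hge n, (hle n).trans_lt hy⟩).le
  have hbdd : BddAbove (range fun n => φ^[n] x₀) := ⟨y, forall_mem_range.2 hle⟩
  have hfix := isFixedPt_of_tendsto_iterate (tendsto_atTop_ciSup hmono hbdd) hφ.continuousAt
  exact (hlt _ ⟨(hge 0).trans (le_ciSup hbdd 0), (ciSup_le hle).trans_lt hy⟩).ne' hfix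

theorem exists_iterate_lt (hφ : Continuous φ) {x₀ a y : α} (hgt : ∀ x ∈ Ioc a x₀, φ x < x)
    (hy : a < y) : ∃ n, φ^[n] x₀ < y :=
  exists_lt_iterate (α := αᵒᵈ) hφ (fun x hx => hgt x ⟨hx.2, hx.1⟩) hy

end Orbit

section Gluing

variable {α β : Type*} [LinearOrder α] [LinearOrder β]

theorem mem_iUnion_Ico_iff {c : ℤ → α} (hc : StrictMono c) {y : α} :
    y ∈ ⋃ n, Ico (c n) (c (n + 1)) ↔ (∃ n, c n ≤ y) ∧ ∃ n, y < c n := by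
  refine ⟨fun hy => ?_, fun ⟨⟨m, hm⟩, ⟨M, hM⟩⟩ => ?_⟩
  · obtain ⟨n, hn⟩ := mem_iUnion.1 hy
    exact ⟨⟨n, hn.1⟩, ⟨n + 1, hn.2⟩⟩
  · obtain ⟨n, hn, hmax⟩ := Int.exists_greatest_of_bdd (P := fun n => c n ≤ y)
      ⟨M, fun n hn => (hc.lt_iff_lt.1 (hn.trans_lt hM)).le⟩ ⟨m, hm⟩
    exact mem_iUnion.2 ⟨n, hn, lt_of_not_ge fun h => (hmax _ h).not_gt (lt_add_one n)⟩

theorem iUnion_Ico_eq_univ [NoMaxOrder α] [NoMinOrder α] {c : ℤ → α} (hc : StrictMono c)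
    (htop : Tendsto c atTop atTop) (hbot : Tendsto c atBot atBot) :
    ⋃ n, Ico (c n) (c (n + 1)) = univ :=
  eq_univ_of_forall fun y => (mem_iUnion_Ico_iff hc).2
    ⟨(hbot.eventually_le_atBot y).exists, (htop.eventually_gt_atTop y).exists⟩

theorem exists_strictMonoOn_glue {c : ℤ → α} {d : ℤ → β} (hc : StrictMono c) (hd : StrictMono d)
    (F : ℤ → α → β) (hF : ∀ n, StrictMonoOn (F n) (Ico (c n) (c (n + 1))))
    (hFc : ∀ n, F n '' Ico (c n) (c (n + 1)) = Ico (d n) (d (n + 1))) :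
    ∃ G : α → β, (∀ n, EqOn G (F n) (Ico (c n) (c (n + 1)))) ∧
      StrictMonoOn G (⋃ n, Ico (c n) (c (n + 1))) ∧
      G '' ⋃ n, Ico (c n) (c (n + 1)) = ⋃ n, Ico (d n) (d (n + 1)) := by
  have hidx : ∀ {m n x y}, x ∈ Ico (c m) (c (m + 1)) → y ∈ Ico (c n) (c (n + 1)) → x ≤ y →
      m ≤ n := fun {m n x y} hx hy hxy =>
    not_lt.1 fun h => (hy.2.trans_le (hc.monotone (by omega))).not_ge (hx.1.trans hxy)
  have hG : ∀ n, EqOn (fun y => F (Classical.epsilon fun m => y ∈ Ico (c m) (c (m + 1))) y) (F n)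
      (Ico (c n) (c (n + 1))) := fun n y hy => by
    have hspec := Classical.epsilon_spec (p := fun m => y ∈ Ico (c m) (c (m + 1))) ⟨n, hy⟩
    dsimp only
    rw [le_antisymm (hidx hspec hy le_rfl) (hidx hy hspec le_rfl)]
  refine ⟨_, hG, ?_, ?_⟩
  · intro x hx y hy hxy
    obtain ⟨m, hm⟩ := mem_iUnion.1 hx
    obtain ⟨n, hn⟩ := mem_iUnion.1 hy
    rw [hG m hm, hG n hn]
    rcases (hidx hm hn hxy.le).lt_or_eq with h | rfl
    · calc F m x < d (m + 1) := (hFc m ▸ mem_image_of_mem _ hm).2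
        _ ≤ d n := hd.monotone h
        _ ≤ F n y := (hFc n ▸ mem_image_of_mem _ hn).1
    · exact hF m hm hn hxy
  · rw [image_iUnion]
    exact iUnion_congr fun n => (hG n).image_eq.trans (hFc n)

theorem StrictMonoOn.update_Ico {k : α → β} {a b : α} {a' b' : β} (hab : a < b) (hab' : a' < b')
    (hk : StrictMonoOn k (Ioo a b)) (himg : k '' Ioo a b = Ioo a' b') :
    StrictMonoOn (update k a a') (Ico a b) ∧ update k a a' '' Ico a b = Ico a' b' := by
  have hEq : EqOn (update k a a') k (Ioo a b) := fun x hx => update_of_ne hx.1.ne' _ _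
  rw [← Ioo_insert_left hab, ← Ioo_insert_left hab', image_insert_eq, update_self, hEq.image_eq,
    himg]
  refine ⟨?_, rfl⟩
  rintro x (rfl | hx) y (rfl | hy) hxy
  · exact absurd hxy (lt_irrefl _)
  · rw [update_self, hEq hy]
    exact (himg ▸ mem_image_of_mem k hy).1
  · exact absurd (hx.1.trans hxy) (lt_irrefl _)
  · rw [hEq hx, hEq hy]
    exact hk hx hy hxy

end Gluing

namespace OrderIso

variable {α : Type*} [Preorder α]

theorem pow_apply (φ : α ≃o α) (n : ℕ) (x : α) : (φ ^ n) x = φ^[n] x := by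
  induction n with
  | zero => rfl
  | succ n ih => rw [pow_succ', RelIso.mul_apply, ih, iterate_succ_apply']

theorem inv_apply_eq_self {φ : α ≃o α} {a : α} (h : φ a = a) : φ⁻¹ a = a := by
  rw [← h, RelIso.inv_apply_self, h]

theorem zpow_apply_eq_self {φ : α ≃o α} {a : α} (h : φ a = a) (n : ℤ) : (φ ^ n) a = a := by
  induction n using Int.induction_on with
  | zero => rfl
  | succ n ih => rw [zpow_add_one, RelIso.mul_apply, h, ih]
  | pred n ih => rw [zpow_sub_one, RelIso.mul_apply, inv_apply_eq_self h, ih]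

theorem zpow_add_one_apply (φ : α ≃o α) (n : ℤ) (x : α) : (φ ^ (n + 1)) x = φ ((φ ^ n) x) := by
  rw [add_comm, zpow_one_add, RelIso.mul_apply]

end OrderIso

theorem exists_affine_orderIso {x₀ x₁ y₀ y₁ : ℝ} (hx : x₀ < x₁) (hy : y₀ < y₁) :
    ∃ L : ℝ ≃o ℝ, L x₀ = y₀ ∧ L x₁ = y₁ := by
  refine ⟨((OrderIso.addRight (-x₀)).trans (OrderIso.mulRight₀ ((y₁ - y₀) / (x₁ - x₀))
    (div_pos (sub_pos.2 hy) (sub_pos.2 hx)))).trans (OrderIso.addRight y₀), by simp, ?_⟩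
  simp only [OrderIso.trans_apply, OrderIso.addRight_apply, OrderIso.mulRight₀_apply]
  field_simp [(sub_pos.2 hx).ne']
  ring

theorem strictMono_zpow_apply_and_iUnion_Ico {φ : ℝ ≃o ℝ} {a b x₀ : ℝ} (hφa : φ a = a)
    (hφb : φ b = b) (hφ : ∀ x ∈ Ioo a b, x < φ x) (hx₀ : x₀ ∈ Ioo a b) :
    StrictMono (fun n : ℤ => (φ ^ n) x₀) ∧
      ⋃ n : ℤ, Ico ((φ ^ n) x₀) ((φ ^ (n + 1)) x₀) = Ioo a b := by
  have hmem : ∀ n : ℤ, (φ ^ n) x₀ ∈ Ioo a b := fun n => by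
    have := (φ ^ n).strictMono
    exact ⟨OrderIso.zpow_apply_eq_self hφa n ▸ this hx₀.1,
      OrderIso.zpow_apply_eq_self hφb n ▸ this hx₀.2⟩
  have hmono : StrictMono (fun n : ℤ => (φ ^ n) x₀) := strictMono_int_of_lt_succ fun n => by
    rw [OrderIso.zpow_add_one_apply]
    exact hφ _ (hmem n)
  refine ⟨hmono, Set.ext fun y => ?_⟩
  rw [mem_iUnion_Ico_iff hmono]
  refine ⟨fun ⟨⟨m, hm⟩, ⟨M, hM⟩⟩ => ⟨(hmem m).1.trans_le hm, hM.trans (hmem M).2⟩, fun hy => ?_⟩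
  obtain ⟨n, hn⟩ := exists_iterate_lt φ⁻¹.continuous (x₀ := x₀)
    (fun x hx => φ.symm_apply_lt.2 (hφ x ⟨hx.1, hx.2.trans_lt hx₀.2⟩)) hy.1
  obtain ⟨N, hN⟩ := exists_lt_iterate φ.continuous (fun x hx => hφ x ⟨hx₀.1.trans_le hx.1, hx.2⟩)
    hy.2
  refine ⟨⟨-n, ?_⟩, ⟨N, ?_⟩⟩
  · rw [zpow_neg, zpow_natCast, ← inv_pow, OrderIso.pow_apply]
    exact hn.le
  · rwa [zpow_natCast, OrderIso.pow_apply]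

/-- Map the fundamental domain `[x₀, φ x₀)` affinely onto `[y₀, ψ y₀)` and extend equivariantly. -/
theorem exists_conj_on_Ioo {φ ψ : ℝ ≃o ℝ} {a b a' b' : ℝ} (hab : a < b) (hab' : a' < b')
    (hφa : φ a = a) (hφb : φ b = b) (hψa : ψ a' = a') (hψb : ψ b' = b')
    (hφ : ∀ x ∈ Ioo a b, x < φ x) (hψ : ∀ y ∈ Ioo a' b', y < ψ y) :
    ∃ k : ℝ → ℝ, StrictMonoOn k (Ioo a b) ∧ k '' Ioo a b = Ioo a' b' ∧
      ∀ x ∈ Ioo a b, k (φ x) = ψ (k x) := by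
  obtain ⟨x₀, hx₀⟩ := nonempty_Ioo.2 hab
  obtain ⟨y₀, hy₀⟩ := nonempty_Ioo.2 hab'
  obtain ⟨he, hU⟩ := strictMono_zpow_apply_and_iUnion_Ico hφa hφb hφ hx₀
  obtain ⟨he', hU'⟩ := strictMono_zpow_apply_and_iUnion_Ico hψa hψb hψ hy₀
  obtain ⟨L, hL₀, hL₁⟩ := exists_affine_orderIso (hφ x₀ hx₀) (hψ y₀ hy₀)
  let K : ℤ → ℝ ≃o ℝ := fun n => ψ ^ n * L * φ ^ (-n)
  have hK₀ : ∀ n, K n ((φ ^ n) x₀) = (ψ ^ n) y₀ := fun n => by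
    rw [← RelIso.mul_apply, show K n * φ ^ n = ψ ^ n * L by simp only [K]; group,
      RelIso.mul_apply, hL₀]
  have hK₁ : ∀ n, K n ((φ ^ (n + 1)) x₀) = (ψ ^ (n + 1)) y₀ := fun n => by
    rw [← RelIso.mul_apply, show K n * φ ^ (n + 1) = ψ ^ n * L * φ by simp only [K]; group,
      RelIso.mul_apply, RelIso.mul_apply, hL₁, ← RelIso.mul_apply, ← zpow_add_one]
  obtain ⟨k, hkK, hkmono, hkimg⟩ := exists_strictMonoOn_glue he he' (fun n => K n)
    (fun n => (K n).strictMono.strictMonoOn _)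
    (fun n => by rw [OrderIso.image_Ico, hK₀, hK₁])
  rw [hU] at hkmono hkimg
  rw [hU'] at hkimg
  refine ⟨k, hkmono, hkimg, fun x hx => ?_⟩
  obtain ⟨n, hn⟩ := mem_iUnion.1 (hU ▸ hx)
  have hφn : φ x ∈ Ico ((φ ^ (n + 1)) x₀) ((φ ^ (n + 1 + 1)) x₀) := by
    rw [OrderIso.zpow_add_one_apply, OrderIso.zpow_add_one_apply]
    exact ⟨φ.monotone hn.1, φ.strictMono hn.2⟩
  rw [hkK n hn, hkK (n + 1) hφn, ← RelIso.mul_apply, ← RelIso.mul_apply,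
    show K (n + 1) * φ = ψ * K n by simp only [K]; group]

theorem exists_conj_on_Ioo_of_apply_lt {φ ψ : ℝ ≃o ℝ} {a b a' b' : ℝ} (hab : a < b)
    (hab' : a' < b') (hφa : φ a = a) (hφb : φ b = b) (hψa : ψ a' = a') (hψb : ψ b' = b')
    (hφ : ∀ x ∈ Ioo a b, φ x < x) (hψ : ∀ y ∈ Ioo a' b', ψ y < y) :
    ∃ k : ℝ → ℝ, StrictMonoOn k (Ioo a b) ∧ k '' Ioo a b = Ioo a' b' ∧
      ∀ x ∈ Ioo a b, k (φ x) = ψ (k x) := by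
  obtain ⟨k, hkmono, hkimg, hk⟩ := exists_conj_on_Ioo hab hab' (OrderIso.inv_apply_eq_self hφa)
    (OrderIso.inv_apply_eq_self hφb) (OrderIso.inv_apply_eq_self hψa)
    (OrderIso.inv_apply_eq_self hψb) (fun x hx => φ.lt_symm_apply.2 (hφ x hx))
    (fun y hy => ψ.lt_symm_apply.2 (hψ y hy))
  refine ⟨k, hkmono, hkimg, fun x hx => ?_⟩
  have hφx : φ x ∈ Ioo a b := ⟨hφa ▸ φ.strictMono hx.1, hφb ▸ φ.strictMono hx.2⟩
  have hkφ := hk (φ x) hφx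
  rw [RelIso.inv_apply_self] at hkφ
  rw [hkφ, RelIso.apply_inv_self]

def CrossAlternately (φ ψ : ℝ → ℝ) : Prop :=
  ∃ c : ℤ → ℝ, StrictMono c ∧ Tendsto c atTop atTop ∧ Tendsto c atBot atBot ∧
    (∀ j, φ (c j) = ψ (c j)) ∧
    (∀ j, Even j → ∀ x ∈ Ioo (c j) (c (j + 1)), ψ x < φ x) ∧
    (∀ j, Odd j → ∀ x ∈ Ioo (c j) (c (j + 1)), φ x < ψ x)

theorem CrossAlternately.symm {φ ψ : ℝ → ℝ} (h : CrossAlternately φ ψ) : CrossAlternately ψ φ := by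
  obtain ⟨c, hc, htop, hbot, hfix, heven, hodd⟩ := h
  refine ⟨fun j => c (j + 1), hc.comp (strictMono_id.add_const 1),
    htop.comp (tendsto_atTop_add_const_right _ 1 tendsto_id),
    hbot.comp (tendsto_atBot_add_const_right _ 1 tendsto_id), fun j => (hfix _).symm,
    fun j hj => hodd _ hj.add_one, fun j hj => heven _ hj.add_one⟩

theorem CrossAlternately.comp_left {φ ψ k : ℝ → ℝ} (hk : StrictMono k)
    (h : CrossAlternately φ ψ) : CrossAlternately (k ∘ φ) (k ∘ ψ) := by
  obtain ⟨c, hc, htop, hbot, hfix, heven, hodd⟩ := h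
  exact ⟨c, hc, htop, hbot, fun j => congrArg k (hfix j),
    fun j hj x hx => hk (heven j hj x hx), fun j hj x hx => hk (hodd j hj x hx)⟩

/-- The reverser sends `(c j, c (j + 1))` to `(c (j + 1), c (j + 2))`, conjugating `φ` on the
first interval to `φ⁻¹` on the second: both push points in the same direction. -/
theorem exists_conj_inv_of_crossAlternately {φ : ℝ ≃o ℝ} (h : CrossAlternately φ id) :
    ∃ κ : ℝ ≃o ℝ, κ * φ * κ⁻¹ = φ⁻¹ := by
  obtain ⟨c, hc, htop, hbot, hfix, heven, hodd⟩ := h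
  simp only [id_eq] at hfix heven hodd
  have hfix' : ∀ j, φ⁻¹ (c j) = c j := fun j => OrderIso.inv_apply_eq_self (hfix j)
  have hconj : ∀ j, ∃ k : ℝ → ℝ, StrictMonoOn k (Ioo (c j) (c (j + 1))) ∧
      k '' Ioo (c j) (c (j + 1)) = Ioo (c (j + 1)) (c (j + 1 + 1)) ∧
      ∀ x ∈ Ioo (c j) (c (j + 1)), k (φ x) = φ⁻¹ (k x) := fun j => by
    rcases Int.even_or_odd j with hj | hj
    · exact exists_conj_on_Ioo (hc (lt_add_one _)) (hc (lt_add_one _)) (hfix j) (hfix _)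
        (hfix' _) (hfix' _) (heven j hj)
        (fun y hy => φ.lt_symm_apply.2 (hodd _ hj.add_one y hy))
    · exact exists_conj_on_Ioo_of_apply_lt (hc (lt_add_one _)) (hc (lt_add_one _)) (hfix j)
        (hfix _) (hfix' _) (hfix' _) (hodd j hj)
        (fun y hy => φ.symm_apply_lt.2 (heven _ hj.add_one y hy))
  choose k hkmono hkimg hk using hconj
  have hF := fun j => (hkmono j).update_Ico (hc (lt_add_one j)) (hc (lt_add_one (j + 1)))
    (hkimg j)
  have hc' : StrictMono fun j => c (j + 1) := hc.comp (strictMono_id.add_const 1)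
  have hcover := iUnion_Ico_eq_univ hc htop hbot
  obtain ⟨K, hKF, hKmono, hKimg⟩ := exists_strictMonoOn_glue hc hc' _ (fun j => (hF j).1)
    (fun j => (hF j).2)
  rw [hcover] at hKmono hKimg
  rw [iUnion_Ico_eq_univ hc' (htop.comp (tendsto_atTop_add_const_right _ 1 tendsto_id))
    (hbot.comp (tendsto_atBot_add_const_right _ 1 tendsto_id))] at hKimg
  rw [image_univ, range_eq_univ] at hKimg
  refine ⟨StrictMono.orderIsoOfSurjective K (strictMonoOn_univ.1 hKmono) hKimg, ?_⟩
  rw [mul_inv_eq_iff_eq_mul]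
  ext x
  obtain ⟨j, hj⟩ := mem_iUnion.1 (hcover ▸ mem_univ x)
  simp only [RelIso.mul_apply, StrictMono.coe_orderIsoOfSurjective]
  rcases eq_left_or_mem_Ioo_of_mem_Ico hj with rfl | hx
  · rw [hfix, hKF j hj, update_self, hfix']
  · have hφx : φ x ∈ Ioo (c j) (c (j + 1)) :=
      ⟨hfix j ▸ φ.strictMono hx.1, hfix (j + 1) ▸ φ.strictMono hx.2⟩
    rw [hKF j (Ioo_subset_Ico_self hφx), hKF j hj, update_of_ne hφx.1.ne',
      update_of_ne hx.1.ne', hk j x hx]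

theorem tendsto_of_add_one_le {u : ℤ → ℝ} (hu : ∀ j, u j + 1 ≤ u (j + 1)) :
    Tendsto u atTop atTop ∧ Tendsto u atBot atBot := by
  have hv : Monotone fun j : ℤ => u j - j := monotone_int_of_le_succ fun j => by
    push_cast; linarith [hu j]
  constructor
  · refine tendsto_atTop_mono' _ ((eventually_ge_atTop 0).mono fun j hj => ?_)
      (tendsto_atTop_add_const_right _ (u 0) tendsto_intCast_atTop_atTop)
    linarith [hv hj, show ((0 : ℤ) : ℝ) = 0 from Int.cast_zero]
  · refine tendsto_atBot_mono' _ ((eventually_le_atBot 0).mono fun j hj => ?_)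
      (tendsto_atBot_add_const_right _ (u 0)
        (tendsto_intCast_atBot_iff.2 tendsto_id : Tendsto (fun j : ℤ => (j : ℝ)) atBot atBot))
    linarith [hv hj, show ((0 : ℤ) : ℝ) = 0 from Int.cast_zero]

theorem tendsto_of_interlace {u v : ℤ → ℝ} (h₁ : ∀ j, u j ≤ v j) (h₂ : ∀ j, v j ≤ u (j + 1))
    (htop : Tendsto u atTop atTop) (hbot : Tendsto u atBot atBot) :
    Tendsto v atTop atTop ∧ Tendsto v atBot atBot :=
  ⟨tendsto_atTop_mono h₁ htop,
    tendsto_atBot_mono h₂ (hbot.comp (tendsto_atBot_add_const_right _ 1 tendsto_id))⟩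

theorem tendsto_of_interlace' {u v : ℤ → ℝ} (h₁ : ∀ j, u j ≤ v j) (h₂ : ∀ j, v j ≤ u (j + 1))
    (htop : Tendsto v atTop atTop) (hbot : Tendsto v atBot atBot) :
    Tendsto u atTop atTop ∧ Tendsto u atBot atBot := by
  refine ⟨tendsto_atTop_mono (fun j => ?_) (htop.comp (tendsto_atTop_add_const_right _ (-1)
    tendsto_id)), tendsto_atBot_mono h₁ hbot⟩
  simpa using h₂ (j + -1)

def CrossesUpAt (φ ψ : ℝ → ℝ) (z : ℝ) : Prop :=
  ∀ x, (φ x < ψ x ↔ x < z) ∧ (ψ x < φ x ↔ z < x)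

namespace CrossesUpAt

variable {φ ψ₁ ψ₂ : ℝ → ℝ} {z₁ z₂ : ℝ}

theorem eq {ψ : ℝ → ℝ} {z : ℝ} (h : CrossesUpAt φ ψ z) : φ z = ψ z :=
  le_antisymm (not_lt.1 fun hlt => lt_irrefl z ((h z).2.1 hlt))
    (not_lt.1 fun hlt => lt_irrefl z ((h z).1.1 hlt))

theorem sup_right (h₁ : CrossesUpAt φ ψ₁ z₁) (h₂ : CrossesUpAt φ ψ₂ z₂) :
    CrossesUpAt φ (ψ₁ ⊔ ψ₂) (z₁ ⊔ z₂) := fun x => by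
  simp only [Pi.sup_apply, lt_sup_iff, sup_lt_iff, (h₁ x).1, (h₁ x).2, (h₂ x).1, (h₂ x).2,
    iff_self, and_self]

theorem inf_right (h₁ : CrossesUpAt φ ψ₁ z₁) (h₂ : CrossesUpAt φ ψ₂ z₂) :
    CrossesUpAt φ (ψ₁ ⊓ ψ₂) (z₁ ⊓ z₂) := fun x => by
  simp only [Pi.inf_apply, lt_inf_iff, inf_lt_iff, (h₁ x).1, (h₁ x).2, (h₂ x).1, (h₂ x).2,
    iff_self, and_self]

theorem sup_left (h₁ : CrossesUpAt ψ₁ φ z₁) (h₂ : CrossesUpAt ψ₂ φ z₂) :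
    CrossesUpAt (ψ₁ ⊔ ψ₂) φ (z₁ ⊓ z₂) := fun x => by
  simp only [Pi.sup_apply, lt_inf_iff, inf_lt_iff, lt_sup_iff, sup_lt_iff, (h₁ x).1, (h₁ x).2,
    (h₂ x).1, (h₂ x).2, iff_self, and_self]

theorem inf_left (h₁ : CrossesUpAt ψ₁ φ z₁) (h₂ : CrossesUpAt ψ₂ φ z₂) :
    CrossesUpAt (ψ₁ ⊓ ψ₂) φ (z₁ ⊔ z₂) := fun x => by
  simp only [Pi.inf_apply, lt_sup_iff, sup_lt_iff, lt_inf_iff, inf_lt_iff, (h₁ x).1, (h₁ x).2,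
    (h₂ x).1, (h₂ x).2, iff_self, and_self]

end CrossesUpAt

theorem exists_mem_Ioo_eq {φ χ : ℝ → ℝ} (hφ : Continuous φ) (hχ : Continuous χ) {u v : ℝ}
    (huv : u ≤ v) (hu : φ u < χ u) (hv : χ v < φ v) : ∃ t ∈ Ioo u v, φ t = χ t := by
  obtain ⟨t, ht, h⟩ := intermediate_value_Ioo' huv (hχ.sub hφ).continuousOn
    (show (0 : ℝ) ∈ Ioo ((χ - φ) v) ((χ - φ) u) by simp [hu, hv])
  exact ⟨t, ht, (sub_eq_zero.1 h).symm⟩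

/-- At `a ⊔ b` the map `G` touches the envelope `F₁ ⊔ F₂`, which `H` has not yet crossed; at
`c ⊓ d` the roles are swapped. -/
theorem exists_eq_of_crossesUpAt_up_down {F₁ F₂ : ℝ → ℝ} {G H : ℝ ≃o ℝ} {a b c d : ℝ}
    (hG₁ : CrossesUpAt G F₁ a) (hG₂ : CrossesUpAt G F₂ b) (hH₁ : CrossesUpAt F₁ H c)
    (hH₂ : CrossesUpAt F₂ H d) (h : a ⊔ b < c ⊓ d) : ∃ t ∈ Ioo (a ⊔ b) (c ⊓ d), G t = H t := by
  have hG := hG₁.sup_right hG₂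
  have hH := hH₁.sup_left hH₂
  exact exists_mem_Ioo_eq G.continuous H.continuous h.le (hG.eq ▸ (hH _).1.2 h)
    (hH.eq ▸ (hG _).2.2 h)

theorem exists_eq_of_crossesUpAt_down_up {F₁ F₂ : ℝ → ℝ} {G H : ℝ ≃o ℝ} {a b c d : ℝ}
    (hG₁ : CrossesUpAt F₁ G a) (hG₂ : CrossesUpAt F₂ G b) (hH₁ : CrossesUpAt H F₁ c)
    (hH₂ : CrossesUpAt H F₂ d) (h : a ⊔ b < c ⊓ d) : ∃ t ∈ Ioo (a ⊔ b) (c ⊓ d), G t = H t := by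
  have hG := hG₁.inf_left hG₂
  have hH := hH₁.inf_right hH₂
  obtain ⟨t, ht, hHG⟩ := exists_mem_Ioo_eq H.continuous G.continuous h.le (hG.eq ▸ (hH _).1.2 h)
    (hH.eq ▸ (hG _).2.2 h)
  exact ⟨t, ht, hHG.symm⟩

noncomputable def supIso {α : Type*} [LinearOrder α] (A B : α ≃o α) : α ≃o α :=
  StrictMono.orderIsoOfSurjective (fun x => A x ⊔ B x)
    (fun _ _ h => max_lt_max (A.strictMono h) (B.strictMono h)) fun y => by
      refine ⟨A.symm y ⊓ B.symm y, ?_⟩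
      show A _ ⊔ B _ = y
      rcases le_total (A.symm y) (B.symm y) with h | h
      · rw [inf_eq_left.2 h, A.apply_symm_apply, sup_eq_left.2 (B.le_symm_apply.1 h)]
      · rw [inf_eq_right.2 h, B.apply_symm_apply, sup_eq_right.2 (A.le_symm_apply.1 h)]

section Pieces

variable (f : ℝ ≃o ℝ)

theorem surjective_add_sub (p : ℝ) : Surjective fun x => f x + x - p := by
  have htop := tendsto_atTop_add_const_right _ (-p) (f.tendsto_atTop.atTop_add_atTop tendsto_id)
  have hbot := tendsto_atBot_add_const_right _ (-p) (f.tendsto_atBot.atBot_add_atBot tendsto_id)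
  simp only [← sub_eq_add_neg] at htop hbot
  exact Continuous.surjective (by have := f.continuous; fun_prop) htop hbot

noncomputable def upPiece (p : ℝ) : ℝ ≃o ℝ :=
  StrictMono.orderIsoOfSurjective (fun x => f x + x - p)
    (fun x y h => by have := f.strictMono h; dsimp only; linarith) (surjective_add_sub f p)

theorem upPiece_apply (p x : ℝ) : upPiece f p x = f x + x - p := rfl

noncomputable def downPiece (p : ℝ) : ℝ ≃o ℝ := (upPiece f⁻¹ p)⁻¹

theorem crossesUpAt_upPiece (p : ℝ) : CrossesUpAt (upPiece f p) f p := fun x => by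
  simp only [upPiece_apply]
  constructor <;> constructor <;> intro h <;> linarith

theorem crossesUpAt_upPiece_id (p : ℝ) : CrossesUpAt (upPiece f p) id (f⁻¹ p) := fun x => by
  simp only [upPiece_apply, id]
  rw [show f⁻¹ p = f.symm p from rfl, f.lt_symm_apply, f.symm_apply_lt]
  constructor <;> constructor <;> intro h <;> linarith

theorem downPiece_lt_iff (p x y : ℝ) : downPiece f p x < y ↔ x < f⁻¹ y + y - p :=
  (upPiece f⁻¹ p).symm_apply_lt

theorem lt_downPiece_iff (p x y : ℝ) : y < downPiece f p x ↔ f⁻¹ y + y - p < x :=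
  (upPiece f⁻¹ p).lt_symm_apply

theorem crossesUpAt_downPiece (p : ℝ) : CrossesUpAt f (downPiece f p) (f⁻¹ p) := fun x => by
  rw [downPiece_lt_iff, lt_downPiece_iff, RelIso.inv_apply_self,
    show f⁻¹ p = f.symm p from rfl, f.lt_symm_apply, f.symm_apply_lt]
  constructor <;> constructor <;> intro h <;> linarith

theorem crossesUpAt_id_downPiece (p : ℝ) : CrossesUpAt id (downPiece f p) (f p) := fun x => by
  rw [id, downPiece_lt_iff, lt_downPiece_iff, show f⁻¹ x = f.symm x from rfl,
    ← f.symm_apply_lt, ← f.lt_symm_apply]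
  constructor <;> constructor <;> intro h <;> linarith

end Pieces

theorem inv_apply_inf_apply_le_and_le_sup (f : ℝ ≃o ℝ) (x : ℝ) :
    f⁻¹ x ⊓ f x ≤ x ∧ x ≤ f⁻¹ x ⊔ f x := by
  rcases le_total x (f x) with h | h
  · exact ⟨inf_le_left.trans (f.symm_apply_le.2 h), h.trans le_sup_right⟩
  · exact ⟨inf_le_right.trans h, (f.le_symm_apply.2 h).trans le_sup_left⟩

theorem exists_seq_separated (f : ℝ ≃o ℝ) : ∃ p : ℤ → ℝ, (∀ j, p j + 1 ≤ p (j + 1)) ∧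
    ∀ j, f (p j) ⊔ f⁻¹ (p j) ⊔ p j < f (p (j + 1)) ⊓ f⁻¹ (p (j + 1)) ⊓ p (j + 1) := by
  set κ := supIso (supIso f f⁻¹) 1
  have hκ : ∀ x, f x ⊔ f⁻¹ x ⊔ x = κ x := fun x => rfl
  have hle : ∀ x, x ≤ κ x := fun x => le_sup_right
  set ρ : ℝ ≃o ℝ := OrderIso.addRight 1 * κ * κ
  have hρ : ∀ x, ρ x = κ (κ x) + 1 := fun x => rfl
  refine ⟨fun j => (ρ ^ j) 0, fun j => ?_, fun j => ?_⟩ <;>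
    simp only [OrderIso.zpow_add_one_apply, hρ, hκ]
  · linarith [hle ((ρ ^ j) 0), hle (κ ((ρ ^ j) 0))]
  · set K := κ ((ρ ^ j) 0)
    have hK : f K ⊔ f⁻¹ K ≤ κ K := le_sup_left
    refine lt_inf_iff.2 ⟨lt_inf_iff.2 ⟨f.symm_apply_lt.1 ?_, f.lt_symm_apply.2 ?_⟩, ?_⟩
    · linarith [show f.symm K ≤ κ K from le_sup_right.trans hK]
    · linarith [show f K ≤ κ K from le_sup_left.trans hK]
    · linarith [hle K]

theorem crossAlternately_of_pieces {g F : ℝ → ℝ} {G : ℤ → ℝ → ℝ} {t z : ℤ → ℝ}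
    (htop : Tendsto t atTop atTop) (hbot : Tendsto t atBot atBot)
    (hg : ∀ j, EqOn g (G j) (Ico (t j) (t (j + 1)))) (hz : ∀ j, z j ∈ Ioo (t j) (t (j + 1)))
    (heven : ∀ j, Even j → CrossesUpAt (G j) F (z j))
    (hodd : ∀ j, Odd j → CrossesUpAt F (G j) (z j)) : CrossAlternately g F := by
  have hzt : ∀ j, t j ≤ z j := fun j => (hz j).1.le
  have htz : ∀ j, z j ≤ t (j + 1) := fun j => (hz j).2.le
  obtain ⟨hztop, hzbot⟩ := tendsto_of_interlace hzt htz htop hbot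
  refine ⟨z, strictMono_int_of_lt_succ fun j => (hz j).2.trans (hz (j + 1)).1, hztop, hzbot,
    fun j => ?_, fun j hj x hx => ?_, fun j hj x hx => ?_⟩
  · rw [hg j (Ioo_subset_Ico_self (hz j))]
    rcases Int.even_or_odd j with h | h
    · exact (heven j h).eq
    · exact (hodd j h).eq.symm
  · rcases lt_or_ge x (t (j + 1)) with hxt | hxt
    · rw [hg j ⟨(hzt j).trans hx.1.le, hxt⟩]
      exact ((heven j hj) x).2.2 hx.1
    · rw [hg (j + 1) ⟨hxt, hx.2.trans (hz (j + 1)).2⟩]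
      exact ((hodd (j + 1) hj.add_one) x).1.2 hx.2
  · rcases lt_or_ge x (t (j + 1)) with hxt | hxt
    · rw [hg j ⟨(hzt j).trans hx.1.le, hxt⟩]
      exact ((hodd j hj) x).2.2 hx.1
    · rw [hg (j + 1) ⟨hxt, hx.2.trans (hz (j + 1)).2⟩]
      exact ((heven (j + 1) hj.add_one) x).1.2 hx.2

theorem exists_breakpoints {F₁ F₂ : ℝ → ℝ} (G : ℤ → ℝ ≃o ℝ) {η ξ p : ℤ → ℝ}
    (heven : ∀ j, Even j → CrossesUpAt (G j) F₁ (η j) ∧ CrossesUpAt (G j) F₂ (ξ j))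
    (hodd : ∀ j, Odd j → CrossesUpAt F₁ (G j) (η j) ∧ CrossesUpAt F₂ (G j) (ξ j))
    (hsep : ∀ j, η j ⊔ ξ j < η (j + 1) ⊓ ξ (j + 1))
    (hp : ∀ j, η j ⊓ ξ j ≤ p j ∧ p j ≤ η j ⊔ ξ j)
    (hptop : Tendsto p atTop atTop) (hpbot : Tendsto p atBot atBot) :
    ∃ t : ℤ → ℝ, StrictMono t ∧ Tendsto t atTop atTop ∧ Tendsto t atBot atBot ∧
      (∀ j, η j ∈ Ioo (t j) (t (j + 1))) ∧ (∀ j, ξ j ∈ Ioo (t j) (t (j + 1))) ∧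
      ∀ j, G j (t (j + 1)) = G (j + 1) (t (j + 1)) := by
  have hbreak : ∀ j, ∃ t ∈ Ioo (η j ⊔ ξ j) (η (j + 1) ⊓ ξ (j + 1)), G j t = G (j + 1) t := by
    intro j
    rcases Int.even_or_odd j with hj | hj
    · exact exists_eq_of_crossesUpAt_up_down (heven j hj).1 (heven j hj).2
        (hodd _ hj.add_one).1 (hodd _ hj.add_one).2 (hsep j)
    · exact exists_eq_of_crossesUpAt_down_up (hodd j hj).1 (hodd j hj).2
        (heven _ hj.add_one).1 (heven _ hj.add_one).2 (hsep j)
  choose s hs hsG using hbreak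
  have hlo : ∀ j, s (j - 1) < η j ⊓ ξ j := fun j => by simpa using (hs (j - 1)).2
  have hhi : ∀ j, η j ⊔ ξ j < s (j + 1 - 1) := fun j => by simpa using (hs j).1
  have hη : ∀ j, η j ∈ Ioo (s (j - 1)) (s (j + 1 - 1)) := fun j =>
    ⟨(hlo j).trans_le inf_le_left, le_sup_left.trans_lt (hhi j)⟩
  obtain ⟨htop, hbot⟩ := tendsto_of_interlace' (u := fun j => s (j - 1))
    (fun j => ((hlo j).trans_le (hp j).1).le) (fun j => ((hp j).2.trans_lt (hhi j)).le) hptop hpbot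
  refine ⟨fun j => s (j - 1), strictMono_int_of_lt_succ fun j => (hη j).1.trans (hη j).2, htop,
    hbot, hη, fun j => ⟨(hlo j).trans_le inf_le_right, le_sup_right.trans_lt (hhi j)⟩,
    fun j => by simpa using hsG j⟩

theorem exists_crossAlternately_of_pieces (f : ℝ ≃o ℝ) (G : ℤ → ℝ ≃o ℝ) {η ξ p : ℤ → ℝ}
    (heven : ∀ j, Even j → CrossesUpAt (G j) f (η j) ∧ CrossesUpAt (G j) id (ξ j))
    (hodd : ∀ j, Odd j → CrossesUpAt f (G j) (η j) ∧ CrossesUpAt id (G j) (ξ j))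
    (hsep : ∀ j, η j ⊔ ξ j < η (j + 1) ⊓ ξ (j + 1))
    (hp : ∀ j, η j ⊓ ξ j ≤ p j ∧ p j ≤ η j ⊔ ξ j)
    (hptop : Tendsto p atTop atTop) (hpbot : Tendsto p atBot atBot) :
    ∃ g : ℝ ≃o ℝ, CrossAlternately g f ∧ CrossAlternately g id := by
  obtain ⟨t, ht, httop, htbot, hη, hξ, hGt⟩ :=
    exists_breakpoints G heven hodd hsep hp hptop hpbot
  have hfixξ : ∀ j, G j (ξ j) = ξ j := fun j => by
    rcases Int.even_or_odd j with hj | hj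
    · exact (heven j hj).2.eq
    · exact (hodd j hj).2.eq.symm
  have hd : StrictMono fun j => G j (t j) := strictMono_int_of_lt_succ fun j =>
    ((G j).strictMono (ht (lt_add_one j))).trans_eq (hGt j)
  obtain ⟨hξtop, hξbot⟩ := tendsto_of_interlace (fun j => (hξ j).1.le) (fun j => (hξ j).2.le)
    httop htbot
  obtain ⟨hdtop, hdbot⟩ := tendsto_of_interlace'
    (fun j => ((G j).monotone (hξ j).1.le).trans_eq (hfixξ j))
    (fun j => (hfixξ j).symm.trans_le (((G j).monotone (hξ j).2.le).trans_eq (hGt j)))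
    hξtop hξbot
  obtain ⟨g, hgG, hgmono, hgimg⟩ := exists_strictMonoOn_glue ht hd (fun j => G j)
    (fun j => (G j).strictMono.strictMonoOn _) (fun j => by rw [OrderIso.image_Ico, hGt])
  rw [iUnion_Ico_eq_univ ht httop htbot] at hgmono hgimg
  rw [iUnion_Ico_eq_univ hd hdtop hdbot, image_univ, range_eq_univ] at hgimg
  refine ⟨StrictMono.orderIsoOfSurjective g (strictMonoOn_univ.1 hgmono) hgimg, ?_, ?_⟩
  · exact crossAlternately_of_pieces httop htbot hgG hη (fun j hj => (heven j hj).1)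
      (fun j hj => (hodd j hj).1)
  · exact crossAlternately_of_pieces httop htbot hgG hξ (fun j hj => (heven j hj).2)
      (fun j hj => (hodd j hj).2)

theorem exists_crossAlternately (f : ℝ ≃o ℝ) :
    ∃ g : ℝ ≃o ℝ, CrossAlternately g f ∧ CrossAlternately g id := by
  obtain ⟨p, hp1, hsep⟩ := exists_seq_separated f
  obtain ⟨hptop, hpbot⟩ := tendsto_of_add_one_le hp1
  refine exists_crossAlternately_of_pieces f
    (fun j => if Even j then upPiece f (p j) else downPiece f (p j))
    (η := fun j => if Even j then p j else f⁻¹ (p j))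
    (ξ := fun j => if Even j then f⁻¹ (p j) else f (p j))
    (fun j hj => ?_) (fun j hj => ?_) (fun j => ?_) (fun j => ?_) hptop hpbot
  · simp only [if_pos hj]
    exact ⟨crossesUpAt_upPiece f _, crossesUpAt_upPiece_id f _⟩
  · simp only [if_neg (Int.not_even_iff_odd.2 hj)]
    exact ⟨crossesUpAt_downPiece f _, crossesUpAt_id_downPiece f _⟩
  · have h := hsep j
    rcases Int.even_or_odd j with hj | hj
    · simp only [if_pos hj, if_neg (Int.not_even_iff_odd.2 hj.add_one)]
      exact (sup_le (by simp) (by simp)).trans_lt (h.trans_le (le_inf (by simp) (by simp)))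
    · simp only [if_neg (Int.not_even_iff_odd.2 hj), if_pos hj.add_one]
      exact (sup_le (by simp) (by simp)).trans_lt (h.trans_le (le_inf (by simp) (by simp)))
  · rcases Int.even_or_odd j with hj | hj
    · simp only [if_pos hj]
      exact ⟨inf_le_left, le_sup_left⟩
    · simp only [if_neg (Int.not_even_iff_odd.2 hj)]
      exact inv_apply_inf_apply_le_and_le_sup f (p j)

theorem OrderIso.isHomeo_toEquiv (φ : ℝ ≃o ℝ) : IsHomeo φ.toEquiv :=
  ⟨φ.continuous, φ.symm.continuous⟩

theorem stmt_0_general (f : Equiv.Perm ℝ) (hfm : StrictMono (⇑f)) :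
    ∃ g h : Equiv.Perm ℝ, IsHomeo g ∧ StrictMono (⇑g) ∧ IsHomeo h ∧ StrictMono (⇑h) ∧
      f = g * h ∧
      (∃ k₁ : Equiv.Perm ℝ, IsHomeo k₁ ∧ StrictMono (⇑k₁) ∧ k₁ * g * k₁⁻¹ = g⁻¹) ∧
      (∃ k₂ : Equiv.Perm ℝ, IsHomeo k₂ ∧ StrictMono (⇑k₂) ∧ k₂ * h * k₂⁻¹ = h⁻¹) := by
  set F := StrictMono.orderIsoOfSurjective f hfm f.surjective
  obtain ⟨G, hGF, hGid⟩ := exists_crossAlternately F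
  have hH : CrossAlternately ⇑(G⁻¹ * F) id := by
    have h := hGF.symm.comp_left (G⁻¹).strictMono
    rwa [show ⇑G⁻¹ ∘ ⇑G = id from funext G.inv_apply_self, ← RelIso.coe_mul] at h
  obtain ⟨k₁, hk₁⟩ := exists_conj_inv_of_crossAlternately hGid
  obtain ⟨k₂, hk₂⟩ := exists_conj_inv_of_crossAlternately hH
  refine ⟨G.toEquiv, (G⁻¹ * F).toEquiv, G.isHomeo_toEquiv, G.strictMono,
    (G⁻¹ * F).isHomeo_toEquiv, (G⁻¹ * F).strictMono, Equiv.ext fun x => ?_,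
    ⟨k₁.toEquiv, k₁.isHomeo_toEquiv, k₁.strictMono, congrArg RelIso.toEquiv hk₁⟩,
    ⟨k₂.toEquiv, k₂.isHomeo_toEquiv, k₂.strictMono, congrArg RelIso.toEquiv hk₂⟩⟩
  simp [F]

/-- H⁺(ℝ) = R₂(H⁺(ℝ)): every orientation preserving homeomorphism of ℝ is a composite of
two orientation preserving homeomorphisms, each reversible in H⁺(ℝ). -/
theorem stmt_0 (f : Equiv.Perm ℝ) (hf : IsHomeo f) (hfm : StrictMono (⇑f)) :
    ∃ g h : Equiv.Perm ℝ, IsHomeo g ∧ StrictMono (⇑g) ∧ IsHomeo h ∧ StrictMono (⇑h) ∧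
      f = g * h ∧
      (∃ k₁ : Equiv.Perm ℝ, IsHomeo k₁ ∧ StrictMono (⇑k₁) ∧ k₁ * g * k₁⁻¹ = g⁻¹) ∧
      (∃ k₂ : Equiv.Perm ℝ, IsHomeo k₂ ∧ StrictMono (⇑k₂) ∧ k₂ * h * k₂⁻¹ = h⁻¹) :=
  stmt_0_general f hfm
end

section
/- Every homeomorphism f of the real line can be written as f = g ∘ h, where g and h are homeomorphisms of ℝ, each of which is reversible in H(ℝ); that is, there exist homeomorphisms k₁ and k₂ of ℝ with k₁ ∘ g ∘ k₁⁻¹ = g⁻¹ and k₂ ∘ h ∘ k₂⁻¹ = h⁻¹. (In other words, H(ℝ) = R₂(H(ℝ)).) -/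
open Function Set

theorem IsHomeo.mul {f g : Equiv.Perm ℝ} (hf : IsHomeo f) (hg : IsHomeo g) : IsHomeo (f * g) :=
  ⟨hf.1.comp hg.1, hg.2.comp hf.2⟩

theorem isHomeo_toEquiv (e : ℝ ≃ₜ ℝ) : IsHomeo e.toEquiv :=
  ⟨e.continuous, e.symm.continuous⟩

theorem conj_mul_eq_inv_of_mul_self_eq_one {G : Type*} [Group G] {a b : G} (ha : a * a = 1)
    (hb : b * b = 1) : a * (a * b) * a⁻¹ = (a * b)⁻¹ := by
  rw [mul_inv_rev, inv_eq_of_mul_eq_one_right ha, inv_eq_of_mul_eq_one_right hb, ← mul_assoc, ha,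
    one_mul]

theorem StrictAnti.perm_symm {α : Type*} [LinearOrder α] {F : Equiv.Perm α} (hF : StrictAnti F) :
    StrictAnti F.symm :=
  fun x y h => hF.lt_iff_gt.1 (by simpa using h)

theorem StrictAnti.involutive_max_perm_symm {α : Type*} [LinearOrder α] {F : Equiv.Perm α}
    (hF : StrictAnti F) : Involutive fun x => max (F x) (F.symm x) := by
  intro x
  dsimp only
  rcases le_total (F.symm x) (F x) with h | h
  · rw [max_eq_left h, Equiv.symm_apply_apply]
    exact max_eq_right (by simpa using hF.antitone h)
  · rw [max_eq_right h, Equiv.apply_symm_apply]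
    exact max_eq_left (by simpa using hF.perm_symm.antitone h)

section Orbit

variable {α : Type*}

theorem strictMono_zpow_apply [Preorder α] {w : α ≃o α} (hw : ∀ x, x < w x) (x : α) :
    StrictMono fun n : ℤ => (w ^ n) x :=
  strictMono_int_of_lt_succ fun n => by
    rw [add_comm, zpow_one_add]
    exact hw ((w ^ n) x)

theorem not_bddAbove_and_not_bddBelow_range_of_apply_succ [ConditionallyCompleteLinearOrder α]
    (w : α ≃o α) (hw : ∀ x, w x ≠ x) {a : ℤ → α} (ha : ∀ n, a (n + 1) = w (a n)) :
    ¬BddAbove (range a) ∧ ¬BddBelow (range a) := by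
  have himage : w '' range a = range a := by
    rw [← range_comp, ← (add_right_surjective 1).range_comp a]
    exact congrArg range (funext fun n => (ha n).symm)
  exact ⟨fun h => hw _ (by rw [w.map_csSup' (range_nonempty a) h, himage]),
    fun h => hw _ (by rw [w.map_csInf' (range_nonempty a) h, himage])⟩

theorem exists_apply_le_and_lt_apply_add_one [LinearOrder α] {a : ℤ → α} (ha : Monotone a)
    (hab : ¬BddAbove (range a)) (hbb : ¬BddBelow (range a)) (y : α) :
    ∃ n, a n ≤ y ∧ y < a (n + 1) := by
  obtain ⟨_, ⟨m, rfl⟩, hm⟩ := not_bddBelow_iff.1 hbb y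
  obtain ⟨_, ⟨M, rfl⟩, hM⟩ := not_bddAbove_iff.1 hab y
  obtain ⟨n, hn, hmax⟩ := Int.exists_greatest_of_bdd (P := fun n => a n ≤ y)
    ⟨M, fun z hz => (ha.reflect_lt (hz.trans_lt hM)).le⟩ ⟨m, hm.le⟩
  exact ⟨n, hn, not_le.1 fun h => by linarith [hmax _ h]⟩

end Orbit

/-- When `0 < w 0`, this maps `[n, n + 1)` onto `w ^ n` of the fundamental domain `[0, w 0)`,
parametrized affinely: it is the conjugacy from `t ↦ t + 1` to `w`. -/
noncomputable def orbitParam (w : ℝ ≃o ℝ) (t : ℝ) : ℝ :=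
  (w ^ ⌊t⌋) (Int.fract t * w 0)

section OrbitParam

variable {w : ℝ ≃o ℝ}

theorem orbitParam_add_one (t : ℝ) : orbitParam w (t + 1) = w (orbitParam w t) := by
  rw [orbitParam, Int.floor_add_one, Int.fract_add_one, add_comm, zpow_one_add]
  rfl

theorem orbitParam_mem_Ico (hw : 0 < w 0) (t : ℝ) :
    orbitParam w t ∈ Ico ((w ^ ⌊t⌋) 0) ((w ^ (⌊t⌋ + 1)) 0) := by
  have h0 : 0 ≤ Int.fract t * w 0 := mul_nonneg (Int.fract_nonneg t) hw.le
  have h1 : Int.fract t * w 0 < w 0 := mul_lt_of_lt_one_left hw (Int.fract_lt_one t)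
  rw [zpow_add_one]
  exact ⟨(w ^ ⌊t⌋).monotone h0, (w ^ ⌊t⌋).strictMono h1⟩

theorem strictMono_orbitParam (hw : ∀ x, x < w x) : StrictMono (orbitParam w) := by
  intro s t hst
  rcases (Int.floor_mono hst.le).eq_or_lt with heq | hlt
  · have hfract : Int.fract s < Int.fract t := by
      rw [Int.fract, Int.fract, heq]
      linarith
    rw [orbitParam, orbitParam, heq]
    exact (w ^ ⌊t⌋).strictMono (mul_lt_mul_of_pos_right hfract (hw 0))
  · calc orbitParam w s < (w ^ (⌊s⌋ + 1)) 0 := (orbitParam_mem_Ico (hw 0) s).2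
      _ ≤ (w ^ ⌊t⌋) 0 := (strictMono_zpow_apply hw 0).monotone hlt
      _ ≤ orbitParam w t := (orbitParam_mem_Ico (hw 0) t).1

theorem surjective_orbitParam (hw : ∀ x, x < w x) : Surjective (orbitParam w) := by
  intro y
  have hmono := strictMono_zpow_apply hw 0
  obtain ⟨hab, hbb⟩ := not_bddAbove_and_not_bddBelow_range_of_apply_succ w (fun x => (hw x).ne')
    (a := fun n : ℤ => (w ^ n) 0) fun n => by rw [add_comm, zpow_one_add]; rfl
  obtain ⟨n, hn, hn'⟩ := exists_apply_le_and_lt_apply_add_one hmono.monotone hab hbb y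
  set z := (w ^ n).symm y
  have hz0 : 0 ≤ z / w 0 := div_nonneg ((w ^ n).le_symm_apply.2 hn) (hw 0).le
  have hz1 : z / w 0 < 1 := by
    rw [zpow_add_one] at hn'
    exact (div_lt_one (hw 0)).2 ((w ^ n).symm_apply_lt.2 hn')
  have hfloor : ⌊(n : ℝ) + z / w 0⌋ = n := Int.floor_eq_iff.2 ⟨by linarith, by linarith⟩
  refine ⟨n + z / w 0, ?_⟩
  rw [orbitParam, hfloor, Int.fract, hfloor, add_sub_cancel_left, div_mul_cancel₀ _ (hw 0).ne']
  exact (w ^ n).apply_symm_apply y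

end OrbitParam

theorem exists_orderIso_semiconj_add_one (w : ℝ ≃o ℝ) (hw : ∀ x, x < w x) :
    ∃ Φ : ℝ ≃o ℝ, Semiconj Φ (· + 1) w :=
  ⟨(strictMono_orbitParam hw).orderIsoOfSurjective _ (surjective_orbitParam hw),
    orbitParam_add_one⟩

theorem exists_isHomeo_conj_eq_inv_of_lt (w : Equiv.Perm ℝ) (hmono : StrictMono w)
    (hw : ∀ x, x < w x) : ∃ k : Equiv.Perm ℝ, IsHomeo k ∧ k * w * k⁻¹ = w⁻¹ := by
  obtain ⟨Φ, hΦ⟩ :=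
    exists_orderIso_semiconj_add_one (hmono.orderIsoOfSurjective w w.surjective) hw
  refine ⟨((Φ.toHomeomorph.symm.trans (Homeomorph.neg ℝ)).trans Φ.toHomeomorph).toEquiv,
    isHomeo_toEquiv _, ?_⟩
  ext x
  obtain ⟨t, rfl⟩ := Φ.surjective x
  have hΦ' : ∀ s, w (Φ s) = Φ (s + 1) := fun s => (hΦ s).symm
  have hw_symm : w.symm (Φ t) = Φ (t - 1) := by
    rw [Equiv.symm_apply_eq, hΦ', sub_add_cancel]
  simp [hΦ', hw_symm, neg_add_eq_sub]

theorem exists_involution_mul_gt_of_strictAnti (f : Equiv.Perm ℝ) (hf : IsHomeo f)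
    (hanti : StrictAnti f) :
    ∃ g : Equiv.Perm ℝ,
      IsHomeo g ∧ g * g = 1 ∧ StrictMono ⇑(g * f) ∧ ∀ x, x < (g * f) x := by
  set F : Equiv.Perm ℝ := Equiv.addRight 1 * f
  have hF : StrictAnti F := fun x y h => add_lt_add_left (hanti h) 1
  have hFc : Continuous fun x => max (F x) (F.symm x) :=
    (hf.1.add continuous_const).max (hf.2.comp (continuous_add_const _))
  set g := hF.involutive_max_perm_symm.toPerm _
  have hg : StrictAnti ⇑g := fun x y h => max_lt_max (hF h) (hF.perm_symm h)
  refine ⟨g, ⟨hFc, hFc⟩, Equiv.ext hF.involutive_max_perm_symm, hg.comp hanti,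
    fun x => ?_⟩
  calc x < f.symm (f x - 1) := by simpa using hanti.perm_symm (sub_one_lt (f x))
    _ ≤ g (f x) := le_max_right _ _

theorem exists_involution_strictAnti_mul (f : Equiv.Perm ℝ) (hf : IsHomeo f) :
    ∃ ε : Equiv.Perm ℝ, IsHomeo ε ∧ ε * ε = 1 ∧ StrictAnti ⇑(ε * f) := by
  rcases hf.1.strictMono_of_inj f.injective with hmono | hanti
  · exact ⟨Equiv.neg ℝ, isHomeo_toEquiv (Homeomorph.neg ℝ), Equiv.ext neg_neg, hmono.neg⟩
  · exact ⟨1, isHomeo_toEquiv (Homeomorph.refl ℝ), mul_one 1, hanti⟩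

/-- H(ℝ) = R₂(H(ℝ)): every homeomorphism of ℝ is a composite of two homeomorphisms,
each reversible in H(ℝ). -/
theorem stmt_1 (f : Equiv.Perm ℝ) (hf : IsHomeo f) :
    ∃ g h : Equiv.Perm ℝ, IsHomeo g ∧ IsHomeo h ∧
      f = g * h ∧
      (∃ k₁ : Equiv.Perm ℝ, IsHomeo k₁ ∧ k₁ * g * k₁⁻¹ = g⁻¹) ∧
      (∃ k₂ : Equiv.Perm ℝ, IsHomeo k₂ ∧ k₂ * h * k₂⁻¹ = h⁻¹) := by
  obtain ⟨ε, hε, hεε, hanti⟩ := exists_involution_strictAnti_mul f hf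
  obtain ⟨g, hg, hgg, hmono, hlt⟩ :=
    exists_involution_mul_gt_of_strictAnti (ε * f) (hε.mul hf) hanti
  refine ⟨ε * g, g * (ε * f), hε.mul hg, hg.mul (hε.mul hf), ?_,
    ⟨ε, hε, conj_mul_eq_inv_of_mul_self_eq_one hεε hgg⟩,
    exists_isHomeo_conj_eq_inv_of_lt _ hmono hlt⟩
  rw [mul_assoc, ← mul_assoc g, hgg, one_mul, ← mul_assoc, hεε, one_mul]
end

section
/- For every positive integer n, if f = g₁ ∘ g₂ ∘ ⋯ ∘ gₙ where each gᵢ belongs to PLF⁺(ℝ) and is reversible in PLF⁺(ℝ) (i.e., there is hᵢ ∈ PLF⁺(ℝ) with hᵢ gᵢ hᵢ⁻¹ = gᵢ⁻¹), then f is the identity map. In particular, the only element of PLF⁺(ℝ) that is reversible in PLF⁺(ℝ) is the identity. -/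
/-- `f` is locally affine at `x`: it agrees with an affine map on a neighbourhood of `x`. -/
def IsLocallyAffineAt (f : ℝ → ℝ) (x : ℝ) : Prop :=
  ∃ a b : ℝ, ∀ᶠ y in nhds x, f y = a * y + b

/-- Membership in PLF(ℝ): a homeomorphism of `ℝ` that is locally affine at all but
finitely many points. -/
def InPLF (f : Equiv.Perm ℝ) : Prop :=
  IsHomeo f ∧ {x : ℝ | ¬ IsLocallyAffineAt (⇑f) x}.Finite

/-- Membership in PL(ℝ): a homeomorphism of `ℝ` whose set of points of non-local-affinity
has no accumulation point in `ℝ`. -/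
def InPL (f : Equiv.Perm ℝ) : Prop :=
  IsHomeo f ∧ ∀ x : ℝ, ¬ AccPt x (Filter.principal {y : ℝ | ¬ IsLocallyAffineAt (⇑f) y})

/-- Two affine maps agreeing near a point have the same coefficients. -/
lemma affine_coeff_eq {a b a' b' x : ℝ}
    (h : ∀ᶠ y in nhds x, a * y + b = a' * y + b') : a = a' ∧ b = b' := by
  rw [Metric.eventually_nhds_iff] at h
  obtain ⟨ε, hε, hy⟩ := h
  have h1 : a * x + b = a' * x + b' := hy (by simp [hε])
  have h2 : a * (x + ε / 2) + b = a' * (x + ε / 2) + b' := by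
    apply hy
    simp only [Real.dist_eq, add_sub_cancel_left, abs_of_pos (by linarith : (0:ℝ) < ε / 2)]
    linarith
  have haa : a = a' := by nlinarith
  subst haa
  exact ⟨rfl, by linarith⟩

/-- A map locally affine at every point of a nonempty preconnected set is affine there. -/
lemma affine_on_preconnected (g : ℝ → ℝ) (S : Set ℝ) (hS : IsPreconnected S)
    (hne : S.Nonempty) (hloc : ∀ x ∈ S, IsLocallyAffineAt g x) :
    ∃ a b : ℝ, ∀ y ∈ S, g y = a * y + b := by
  obtain ⟨x₀, hx₀⟩ := hne
  obtain ⟨a, b, hab⟩ := hloc x₀ hx₀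
  set U : Set ℝ := {x | ∀ᶠ y in nhds x, g y = a * y + b} with hU
  set V : Set ℝ := {x | ∃ a' b' : ℝ, ¬(a' = a ∧ b' = b) ∧ ∀ᶠ y in nhds x, g y = a' * y + b'}
    with hV
  have hUopen : IsOpen U := isOpen_setOf_eventually_nhds
  have hVopen : IsOpen V := by
    have : V = ⋃ a' : ℝ, ⋃ b' : ℝ, ⋃ _ : ¬(a' = a ∧ b' = b),
        {x | ∀ᶠ y in nhds x, g y = a' * y + b'} := by
      ext x; simp [hV]
    rw [this]
    exact isOpen_iUnion fun a' => isOpen_iUnion fun b' => isOpen_iUnion fun _ =>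
      isOpen_setOf_eventually_nhds
  have hdisj : Disjoint U V := by
    rw [Set.disjoint_left]
    rintro x hxU ⟨a', b', hne', hev⟩
    have : ∀ᶠ y in nhds x, a' * y + b' = a * y + b := by
      filter_upwards [hxU, hev] with y h1 h2
      rw [← h1, ← h2]
    exact hne' (affine_coeff_eq this)
  have hcover : S ⊆ U ∪ V := by
    intro x hx
    obtain ⟨a', b', hev⟩ := hloc x hx
    by_cases hc : a' = a ∧ b' = b
    · left; rw [hU]; simpa [hc.1, hc.2] using hev
    · right; exact ⟨a', b', hc, hev⟩
  have hsub : S ⊆ U :=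
    hS.subset_left_of_subset_union hUopen hVopen hdisj hcover ⟨x₀, hx₀, hab⟩
  exact ⟨a, b, fun y hy => (hsub hy).self_of_nhds⟩

/-- An increasing element of PLF(ℝ) is affine, with positive slope, near `+∞`. -/
lemma ev_affine_top (g : Equiv.Perm ℝ) (hP : InPLF g) (hM : StrictMono ⇑g) :
    ∃ M a b : ℝ, 0 < a ∧ ∀ y, M < y → g y = a * y + b := by
  obtain ⟨M, hMub⟩ := hP.2.bddAbove
  have hloc : ∀ x ∈ Set.Ioi M, IsLocallyAffineAt (⇑g) x := by
    intro x hx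
    by_contra hc
    exact absurd (hMub hc) (not_le.2 hx)
  obtain ⟨a, b, hab⟩ := affine_on_preconnected (⇑g) (Set.Ioi M) isPreconnected_Ioi
    ⟨M + 1, by simp⟩ hloc
  refine ⟨M, a, b, ?_, fun y hy => hab y hy⟩
  have h1 : g (M + 1) = a * (M + 1) + b := hab _ (by simp)
  have h2 : g (M + 2) = a * (M + 2) + b := hab _ (Set.mem_Ioi.mpr (by linarith))
  have := hM (by linarith : M + 1 < M + 2)
  rw [h1, h2] at this
  nlinarith

/-- For a strictly monotone bijection, `w < g w` implies `g.symm w < w`. -/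
lemma symm_lt_of_lt (g : Equiv.Perm ℝ) (hM : StrictMono ⇑g) {w : ℝ} (h : w < g w) :
    g.symm w < w := by
  by_contra hc
  push_neg at hc
  have := hM.monotone hc
  rw [g.apply_symm_apply] at this
  linarith

lemma lt_symm_of_lt (g : Equiv.Perm ℝ) (hM : StrictMono ⇑g) {w : ℝ} (h : g w < w) :
    w < g.symm w := by
  by_contra hc
  push_neg at hc
  have := hM.monotone hc
  rw [g.apply_symm_apply] at this
  linarith

/-- A reversible increasing element of PLF(ℝ) is the identity. -/
lemma reversible_eq_one (g h : Equiv.Perm ℝ) (hgP : InPLF g) (hgM : StrictMono ⇑g)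
    (hhP : InPLF h) (hhM : StrictMono ⇑h) (hrel : ∀ x, h (g x) = g.symm (h x)) :
    g = 1 := by
  have key : ∀ x, g (h (g x)) = h x := by
    intro x; rw [hrel]; exact g.apply_symm_apply _
  set S : Set ℝ := {x | g x ≠ x} with hSdef
  by_cases hS : S.Nonempty
  case neg =>
    ext x
    by_contra hc
    exact hS ⟨x, hc⟩
  exfalso
  -- eventual affinity at +∞
  obtain ⟨M, a, b, ha, hga⟩ := ev_affine_top g hgP hgM
  obtain ⟨N, c, d, hc, hha⟩ := ev_affine_top h hhP hhM
  -- the composite relation at +∞ gives a = 1, b = 0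
  have hsymmMono : ∀ z, M < z ↔ h.symm M < h.symm z := by
    intro z
    constructor
    · intro hz
      by_contra hcon
      push_neg at hcon
      have := hhM.monotone hcon
      simp only [h.apply_symm_apply] at this
      linarith
    · intro hz
      have := hhM hz
      simp only [h.apply_symm_apply] at this
      linarith
  set Y : ℝ := max (max M N) (max ((N - b) / a) ((h.symm M - b) / a)) with hY
  have hcomp : ∀ y, Y < y → a * (c * (a * y + b) + d) + b = c * y + d := by
    intro y hy
    have hyM : M < y := lt_of_le_of_lt (le_trans (le_max_left _ _) (le_max_left _ _)) hy
    have hyN : N < y := lt_of_le_of_lt (le_trans (le_max_right _ _) (le_max_left _ _)) hy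
    have hy1 : (N - b) / a < y :=
      lt_of_le_of_lt (le_trans (le_max_left _ _) (le_max_right _ _)) hy
    have hy2 : (h.symm M - b) / a < y :=
      lt_of_le_of_lt (le_trans (le_max_right _ _) (le_max_right _ _)) hy
    have hgyN : N < a * y + b := by
      rw [div_lt_iff₀ ha] at hy1; linarith
    have hgyM : M < c * (a * y + b) + d := by
      -- h (g y) > M since g y > h.symm M
      have hgy : h.symm M < a * y + b := by
        rw [div_lt_iff₀ ha] at hy2; linarith
      have : M < h (a * y + b) := by
        have := hhM hgy
        rwa [h.apply_symm_apply] at this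
      rwa [hha _ hgyN] at this
    have := key y
    rw [hga y hyM, hha _ hgyN, hga _ hgyM, hha _ hyN] at this
    exact this
  have e1 := hcomp (Y + 1) (by linarith)
  have e2 := hcomp (Y + 2) (by linarith)
  have h4 : (a - 1) * ((a + 1) * c) = 0 := by linear_combination e2 - e1
  have ha1 : a = 1 := by
    rcases mul_eq_zero.1 h4 with h' | h'
    · linarith
    · nlinarith
  have hb0 : b = 0 := by
    subst ha1
    have h6 : b * (c + 1) = 0 := by linear_combination e1
    rcases mul_eq_zero.1 h6 with h' | h'
    · exact h'
    · linarith
  -- so g is the identity beyond M, hence S is bounded above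
  have hid : ∀ y, M < y → g y = y := by
    intro y hy; rw [hga y hy, ha1, hb0]; ring
  have hbdd : BddAbove S := by
    refine ⟨M, fun x hx => ?_⟩
    by_contra hcon
    push_neg at hcon
    exact hx (hid x hcon)
  set s : ℝ := sSup S with hs
  have hub : ∀ x ∈ S, x ≤ s := fun x hx => le_csSup hbdd hx
  -- g s = s
  have hgs : g s = s := by
    have hcl : IsClosed {x : ℝ | g x = x} := isClosed_eq hgP.1.1 continuous_id
    have hsub : Set.Ioi s ⊆ {x : ℝ | g x = x} := by
      intro x hx
      by_contra hcon
      have := hub x hcon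
      exact absurd this (not_le.2 hx)
    have : Set.Ici s ⊆ {x : ℝ | g x = x} := by
      rw [← closure_Ioi]
      exact hcl.closure_subset_iff.2 hsub
    exact this (Set.self_mem_Ici)
  -- h maps S to S
  have hmem : ∀ x, h x ∈ S ↔ x ∈ S := by
    intro x
    have hghx : g (h x) = h (g.symm x) := by
      have := key (g.symm x)
      rwa [g.apply_symm_apply] at this
    simp only [hSdef, Set.mem_setOf_eq, hghx]
    constructor
    · intro hne heq
      apply hne
      have h7 : g.symm x = x := by
        have := congrArg (⇑g.symm) heq
        rw [g.symm_apply_apply] at this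
        exact this.symm
      rw [h7]
    · intro hne heq
      apply hne
      have : g (g.symm x) = g x := congrArg _ (hhM.injective heq)
      rw [g.apply_symm_apply] at this
      exact this.symm
  have hsymmem : ∀ x, h.symm x ∈ S ↔ x ∈ S := by
    intro x
    conv_rhs => rw [← h.apply_symm_apply x]
    exact (hmem _).symm
  -- h s = s
  have hsymmMono' : Monotone ⇑h.symm := by
    intro u v huv
    by_contra hcon
    push_neg at hcon
    have := hhM hcon
    simp only [h.apply_symm_apply] at this
    linarith
  have hhs : h s = s := by
    have h1 : s ≤ h s := by
      apply csSup_le hS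
      intro x hx
      have hx' : h.symm x ∈ S := (hsymmem x).2 hx
      have := hhM.monotone (hub _ hx')
      rwa [h.apply_symm_apply] at this
    have h2 : s ≤ h.symm s := by
      apply csSup_le hS
      intro x hx
      have hx' : h x ∈ S := (hmem x).2 hx
      have := hsymmMono' (hub _ hx')
      rwa [h.symm_apply_apply] at this
    have := hhM.monotone h2
    rw [h.apply_symm_apply] at this
    linarith
  -- a punctured left-neighbourhood of s where g is locally affine
  set F : Set ℝ := {x : ℝ | ¬ IsLocallyAffineAt (⇑g) x} with hF
  have hFcl : IsClosed (F \ {s}) := ((hgP.2).subset Set.diff_subset).isClosed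
  have hsmem : s ∈ (F \ {s})ᶜ := fun hx => hx.2 rfl
  obtain ⟨ε, hε, hball⟩ := Metric.mem_nhds_iff.1 (hFcl.isOpen_compl.mem_nhds hsmem)
  have hloc : ∀ x ∈ Set.Ioo (s - ε) s, IsLocallyAffineAt (⇑g) x := by
    intro x hx
    have hxball : x ∈ Metric.ball s ε := by
      simp only [Metric.mem_ball, Real.dist_eq]
      rw [abs_of_nonpos (by linarith [hx.2] : x - s ≤ 0)]
      linarith [hx.1]
    have := hball hxball
    simp only [Set.mem_compl_iff, Set.mem_diff, Set.mem_singleton_iff, not_and, not_not] at this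
    by_contra hcon
    exact absurd (this hcon) (ne_of_lt hx.2)
  obtain ⟨p, q, hpq⟩ := affine_on_preconnected (⇑g) (Set.Ioo (s - ε) s) isPreconnected_Ioo
    ⟨s - ε / 2, by constructor <;> linarith⟩ hloc
  -- continuity forces p * s + q = s
  have hbd : p * s + q = s := by
    have heq : Set.EqOn (⇑g) (fun y => p * y + q) (Set.Ioo (s - ε) s) := fun y hy => hpq y hy
    have hcl := heq.closure hgP.1.1 ((continuous_const.mul continuous_id).add continuous_const)
    rw [closure_Ioo (by linarith : s - ε ≠ s)] at hcl
    have := hcl (Set.mem_Icc.2 ⟨by linarith, le_refl s⟩)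
    simp only at this
    rw [← this, hgs]
  -- there is a point of S in the interval
  obtain ⟨x₁, hx₁S, hx₁⟩ := exists_lt_of_lt_csSup hS (by linarith : s - ε < s)
  have hx₁lt : x₁ < s := lt_of_le_of_ne (hub _ hx₁S) (fun he => hx₁S (he ▸ hgs))
  have hx₁mem : x₁ ∈ Set.Ioo (s - ε) s := ⟨hx₁, hx₁lt⟩
  have hp1 : p ≠ 1 := by
    intro hp
    apply hx₁S
    have : q = 0 := by rw [hp] at hbd; linarith
    rw [hpq x₁ hx₁mem, hp, this]; ring
  -- on the interval, g y - y = (p - 1) * (y - s)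
  have hform : ∀ y ∈ Set.Ioo (s - ε) s, g y - y = (p - 1) * (y - s) := by
    intro y hy
    rw [hpq y hy]
    nlinarith [hbd]
  -- choose z close to s with h z in the interval
  have hUz : (⇑h) ⁻¹' (Set.Ioi (s - ε)) ∈ nhds s := by
    have : Set.Ioi (s - ε) ∈ nhds (h s) := Ioi_mem_nhds (by rw [hhs]; linarith)
    exact hhP.1.1.continuousAt.preimage_mem_nhds this
  obtain ⟨δ, hδ, hballz⟩ := Metric.mem_nhds_iff.1 hUz
  set z : ℝ := s - min δ ε / 2 with hz
  have hmin : 0 < min δ ε := lt_min hδ hε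
  have hzlt : z < s := by rw [hz]; linarith
  have hzmem : z ∈ Set.Ioo (s - ε) s := by
    refine ⟨?_, hzlt⟩
    have : min δ ε ≤ ε := min_le_right _ _
    rw [hz]; linarith
  have hhzmem : h z ∈ Set.Ioo (s - ε) s := by
    constructor
    · apply hballz
      simp only [Metric.mem_ball, Real.dist_eq, hz]
      rw [show s - min δ ε / 2 - s = -(min δ ε / 2) by ring, abs_neg,
        abs_of_pos (by linarith : (0:ℝ) < min δ ε / 2)]
      have : min δ ε ≤ δ := min_le_left _ _
      linarith
    · rw [← hhs]; exact hhM hzlt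
  -- derive contradiction by cases on p
  rcases lt_or_gt_of_ne hp1 with hplt | hpgt
  · -- p < 1 : g y > y on the interval
    have hgz : z < g z := by
      have := hform z hzmem
      nlinarith [hzmem.2]
    have hghz : h z < g (h z) := by
      have := hform (h z) hhzmem
      nlinarith [hhzmem.2]
    have h1 : h z < h (g z) := hhM hgz
    have h2 : g.symm (h z) < h z := symm_lt_of_lt g hgM hghz
    rw [hrel z] at h1
    linarith
  · -- p > 1 : g y < y on the interval
    have hgz : g z < z := by
      have := hform z hzmem
      nlinarith [hzmem.2]
    have hghz : g (h z) < h z := by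
      have := hform (h z) hhzmem
      nlinarith [hhzmem.2]
    have h1 : h (g z) < h z := hhM hgz
    have h2 : h z < g.symm (h z) := lt_symm_of_lt g hgM hghz
    rw [hrel z] at h1
    linarith

/-- Any composite of finitely many (at least one) elements of PLF⁺(ℝ), each reversible in
PLF⁺(ℝ), is the identity. -/
theorem stmt_2 (n : ℕ) (hn : 0 < n) (g : Fin n → Equiv.Perm ℝ)
    (hg : ∀ i, InPLF (g i) ∧ StrictMono (⇑(g i)))
    (hrev : ∀ i, ∃ h : Equiv.Perm ℝ, InPLF h ∧ StrictMono (⇑h) ∧ h * g i * h⁻¹ = (g i)⁻¹)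
    (f : Equiv.Perm ℝ) (hf : f = (List.ofFn g).prod) :
    f = 1 := by
  have hone : ∀ i, g i = 1 := by
    intro i
    obtain ⟨h, hhP, hhM, hconj⟩ := hrev i
    apply reversible_eq_one (g i) h (hg i).1 (hg i).2 hhP hhM
    intro x
    have := congrFun (congrArg (fun (e : Equiv.Perm ℝ) => (⇑e : ℝ → ℝ)) hconj) (h x)
    simp only [Equiv.Perm.mul_apply] at this
    rw [show h⁻¹ (h x) = x from h.symm_apply_apply x] at this
    rw [this]
    rfl
  rw [hf]
  apply List.prod_eq_one
  intro x hx
  rw [List.mem_ofFn] at hx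
  obtain ⟨i, hi⟩ := hx
  rw [← hi, hone i]
end

section
/- Every element of PL⁺(ℝ) can be written as a composite of four elements of PL⁺(ℝ), each of which is reversible in PL⁺(ℝ) (i.e., each is conjugated to its inverse by some element of PL⁺(ℝ)). In other words, PL⁺(ℝ) = R₄(PL⁺(ℝ)). -/
open Filter Set Topology

theorem isLocallyAffineAt_affine (a b x : ℝ) : IsLocallyAffineAt (fun y => a * y + b) x :=
  ⟨a, b, .of_forall fun _ => rfl⟩

theorem IsLocallyAffineAt.congr {f g : ℝ → ℝ} {x : ℝ} (h : IsLocallyAffineAt f x)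
    (hfg : f =ᶠ[𝓝 x] g) : IsLocallyAffineAt g x := by
  obtain ⟨a, b, hab⟩ := h
  exact ⟨a, b, by filter_upwards [hab, hfg] with y h1 h2 using h2 ▸ h1⟩

theorem IsLocallyAffineAt.continuousAt {f : ℝ → ℝ} {x : ℝ} (h : IsLocallyAffineAt f x) :
    ContinuousAt f x := by
  obtain ⟨a, b, hab⟩ := h
  exact (continuous_const.mul continuous_id |>.add continuous_const).continuousAt.congr
    (hab.mono fun _ hy => hy.symm)

theorem IsLocallyAffineAt.comp {f g : ℝ → ℝ} {x : ℝ} (hg : IsLocallyAffineAt g (f x))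
    (hf : IsLocallyAffineAt f x) : IsLocallyAffineAt (g ∘ f) x := by
  obtain ⟨c, d, hcd⟩ := hg
  obtain ⟨a, b, hab⟩ := id hf
  refine ⟨c * a, c * b + d, ?_⟩
  filter_upwards [hab, hf.continuousAt.eventually hcd] with y h1 h2
  rw [Function.comp_apply, h2, h1]
  ring

theorem IsLocallyAffineAt.symm (e : ℝ ≃ₜ ℝ) {x : ℝ} (h : IsLocallyAffineAt e x) :
    IsLocallyAffineAt e.symm (e x) := by
  obtain ⟨a, b, hab⟩ := h
  have ha : a ≠ 0 := by
    rintro rfl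
    obtain ⟨y, hy, hxy⟩ := ((hab.filter_mono nhdsWithin_le_nhds).and
      (self_mem_nhdsWithin (s := Ioi x))).exists
    exact hxy.ne' (e.injective (by rw [hy, hab.self_of_nhds]; ring))
  refine ⟨a⁻¹, -b / a, ?_⟩
  have hback : ∀ᶠ z in 𝓝 (e x), e (e.symm z) = a * e.symm z + b :=
    (e.symm.continuous.tendsto' (e x) x (e.symm_apply_apply x)).eventually hab
  filter_upwards [hback] with z hz
  rw [e.apply_symm_apply] at hz
  field_simp
  linarith

def breaks (f : ℝ → ℝ) : Set ℝ := {x | ¬ IsLocallyAffineAt f x}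

def LocallyFiniteBreaks (f : ℝ → ℝ) : Prop := ∀ a b : ℝ, (breaks f ∩ Icc a b).Finite

theorem forall_not_accPt_iff_finite_inter_Icc {S : Set ℝ} :
    (∀ x, ¬ AccPt x (𝓟 S)) ↔ ∀ a b : ℝ, (S ∩ Icc a b).Finite := by
  refine ⟨fun h a b => ?_, fun h x hx => ?_⟩
  · by_contra hinf
    obtain ⟨x, -, hx⟩ := Set.Infinite.exists_accPt_of_subset_isCompact hinf isCompact_Icc
      inter_subset_right
    exact h x (hx.mono (principal_mono.2 inter_subset_left))
  · have hIcc : Icc (x - 1) (x + 1) ∈ 𝓝 x := Icc_mem_nhds (by linarith) (by linarith)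
    have hacc : AccPt x (𝓟 (S ∩ Icc (x - 1) (x + 1))) := by
      rw [accPt_iff_frequently] at hx ⊢
      exact (hx.and_eventually hIcc).mono fun y ⟨⟨hyx, hyS⟩, hyI⟩ => ⟨hyx, hyS, hyI⟩
    exact Set.Infinite.of_accPt hacc (h _ _)

theorem breaks_comp_subset (f g : ℝ → ℝ) : breaks (g ∘ f) ⊆ breaks f ∪ f ⁻¹' breaks g := by
  intro x hx
  by_contra h
  simp only [breaks, mem_union, mem_preimage, mem_ofPred_eq, not_or, not_not] at h hx
  exact hx (h.2.comp h.1)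

theorem LocallyFiniteBreaks.comp {f g : ℝ → ℝ} (hg : LocallyFiniteBreaks g)
    (hf : LocallyFiniteBreaks f) (hmono : StrictMono f) : LocallyFiniteBreaks (g ∘ f) := by
  intro a b
  refine ((hf a b).union ((hg (f a) (f b)).preimage hmono.injective.injOn)).subset ?_
  rintro x ⟨hx, hxa, hxb⟩
  rcases breaks_comp_subset f g hx with h | h
  · exact Or.inl ⟨h, hxa, hxb⟩
  · exact Or.inr ⟨h, hmono.monotone hxa, hmono.monotone hxb⟩

theorem LocallyFiniteBreaks.symm {e : ℝ ≃o ℝ} (h : LocallyFiniteBreaks e) :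
    LocallyFiniteBreaks e.symm := by
  intro a b
  refine ((h (e.symm a) (e.symm b)).image e).subset ?_
  rintro y ⟨hy, hya, hyb⟩
  refine ⟨e.symm y, ⟨fun hla => hy ?_, e.symm.monotone hya, e.symm.monotone hyb⟩,
    e.apply_symm_apply y⟩
  simpa using IsLocallyAffineAt.symm e.toHomeomorph hla

theorem breaks_affine (a b : ℝ) : breaks (fun y => a * y + b) = ∅ :=
  eq_empty_of_forall_notMem fun x hx => hx (isLocallyAffineAt_affine a b x)

theorem locallyFiniteBreaks_affine (a b : ℝ) : LocallyFiniteBreaks (fun y => a * y + b) :=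
  fun _ _ => by simp [breaks_affine]

def PLPlus : Subgroup (Equiv.Perm ℝ) where
  carrier := {f | StrictMono f ∧ LocallyFiniteBreaks f}
  one_mem' := ⟨strictMono_id, by convert locallyFiniteBreaks_affine 1 0; simp⟩
  mul_mem' hf hg := ⟨hf.1.comp hg.1, hf.2.comp hg.2 hg.1⟩
  inv_mem' {f} hf :=
    let e : ℝ ≃o ℝ := ⟨f, hf.1.le_iff_le⟩
    ⟨e.symm.strictMono, LocallyFiniteBreaks.symm (e := e) hf.2⟩

theorem mem_PLPlus_iff {f : Equiv.Perm ℝ} : f ∈ PLPlus ↔ InPL f ∧ StrictMono f := by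
  let e : StrictMono f → ℝ ≃o ℝ := fun hf => ⟨f, hf.le_iff_le⟩
  refine ⟨fun hf => ⟨⟨⟨(e hf.1).continuous, (e hf.1).symm.continuous⟩, ?_⟩, hf.1⟩,
    fun hf => ⟨hf.2, ?_⟩⟩
  · exact forall_not_accPt_iff_finite_inter_Icc.2 hf.2
  · exact forall_not_accPt_iff_finite_inter_Icc.1 hf.1.2

theorem PLPlus.strictMono {f : Equiv.Perm ℝ} (hf : f ∈ PLPlus) : StrictMono f := hf.1

theorem PLPlus.continuous {f : Equiv.Perm ℝ} (hf : f ∈ PLPlus) : Continuous f :=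
  (mem_PLPlus_iff.1 hf).1.1.1

theorem tendsto_intCast_atBot_atBot : Tendsto (fun n : ℤ => (n : ℝ)) atBot atBot :=
  tendsto_intCast_atBot_iff.2 tendsto_id

theorem tendsto_atBot_atTop_of_abs_sub_le {p : ℤ → ℝ} {α B : ℝ} (hα : 0 < α)
    (h : ∀ n, |p n - α * n| ≤ B) : Tendsto p atBot atBot ∧ Tendsto p atTop atTop := by
  refine ⟨tendsto_atBot_mono (fun n => ?_) (tendsto_atBot_add_const_right _ B
      (tendsto_intCast_atBot_atBot.const_mul_atBot hα)),
    tendsto_atTop_mono (fun n => ?_) (tendsto_atTop_add_const_right _ (-B)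
      (tendsto_intCast_atTop_atTop.const_mul_atTop hα))⟩ <;>
  linarith [abs_le.1 (h n)]

theorem exists_mem_Ico_of_tendsto {p : ℤ → ℝ} (hbot : Tendsto p atBot atBot)
    (htop : Tendsto p atTop atTop) (x : ℝ) : ∃ n, x ∈ Ico (p n) (p (n + 1)) := by
  obtain ⟨N, hN⟩ := (htop.eventually_gt_atTop x).exists_forall_of_atTop
  obtain ⟨n, hn, hmax⟩ := Int.exists_greatest_of_bdd
    ⟨N, fun z hz => not_lt.1 fun hNz => (hN z hNz.le).not_ge hz⟩
    (hbot.eventually_le_atBot x).exists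
  exact ⟨n, hn, lt_of_not_ge fun h => (hmax (n + 1) h).not_gt (lt_add_one n)⟩

theorem StrictMono.eq_of_mem_Ico {p : ℤ → ℝ} (hp : StrictMono p) {n m : ℤ} {x : ℝ}
    (hn : x ∈ Ico (p n) (p (n + 1))) (hm : x ∈ Ico (p m) (p (m + 1))) : n = m := by
  have h1 : n < m + 1 := hp.lt_iff_lt.1 (hn.1.trans_lt hm.2)
  have h2 : m < n + 1 := hp.lt_iff_lt.1 (hm.1.trans_lt hn.2)
  omega

theorem Monotone.tendsto_atBot_atTop_of_succ_eq {p : ℤ → ℝ} (hp : Monotone p) {w : ℝ → ℝ}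
    (hw : Continuous w) (hfix : ∀ x, w x ≠ x) (hstep : ∀ k, p (k + 1) = w (p k)) :
    Tendsto p atBot atBot ∧ Tendsto p atTop atTop := by
  have hshift_bot : Tendsto (fun k : ℤ => k + 1) atBot atBot :=
    tendsto_atBot_add_const_right _ 1 tendsto_id
  have hshift_top : Tendsto (fun k : ℤ => k + 1) atTop atTop :=
    tendsto_atTop_add_const_right _ 1 tendsto_id
  refine ⟨tendsto_atBot_atBot_of_monotone' hp fun hbdd => hfix (⨅ k, p k) ?_,
    tendsto_atTop_atTop_of_monotone' hp fun hbdd => hfix (⨆ k, p k) ?_⟩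
  · have hL := tendsto_atBot_ciInf hp hbdd
    exact tendsto_nhds_unique ((hw.tendsto _).comp hL)
      ((hL.comp hshift_bot).congr fun k => hstep k)
  · have hL := tendsto_atTop_ciSup hp hbdd
    exact tendsto_nhds_unique ((hw.tendsto _).comp hL)
      ((hL.comp hshift_top).congr fun k => hstep k)

theorem Equiv.Perm.zpow_apply_zpow_apply {α : Type*} (σ : Equiv.Perm α) (i j : ℤ) (x : α) :
    (σ ^ i) ((σ ^ j) x) = (σ ^ (i + j)) x := by
  rw [zpow_add, Equiv.Perm.mul_apply]

theorem Equiv.Perm.zpow_succ_apply {α : Type*} (σ : Equiv.Perm α) (k : ℤ) (x : α) :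
    (σ ^ (k + 1)) x = σ ((σ ^ k) x) := by
  simpa [add_comm] using (σ.zpow_apply_zpow_apply 1 k x).symm

structure Gluing where
  node : ℤ → ℝ
  value : ℤ → ℝ
  piece : ℤ → ℝ → ℝ
  strictMono_node : StrictMono node
  tendsto_node_atBot : Tendsto node atBot atBot
  tendsto_node_atTop : Tendsto node atTop atTop
  tendsto_value_atBot : Tendsto value atBot atBot
  tendsto_value_atTop : Tendsto value atTop atTop
  piece_node (n : ℤ) : piece n (node n) = value n
  piece_node_succ (n : ℤ) : piece n (node (n + 1)) = value (n + 1)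
  strictMonoOn_piece (n : ℤ) : StrictMonoOn (piece n) (Icc (node n) (node (n + 1)))
  continuousOn_piece (n : ℤ) : ContinuousOn (piece n) (Icc (node n) (node (n + 1)))
  finite_breaks_piece (n : ℤ) : (breaks (piece n) ∩ Ioo (node n) (node (n + 1))).Finite

namespace Gluing

variable (D : Gluing)

theorem exists_mem_Ico (x : ℝ) : ∃ n, x ∈ Ico (D.node n) (D.node (n + 1)) :=
  exists_mem_Ico_of_tendsto D.tendsto_node_atBot D.tendsto_node_atTop x

noncomputable def toFun (x : ℝ) : ℝ := D.piece (D.exists_mem_Ico x).choose x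

variable {D}

theorem toFun_eq {n : ℤ} {x : ℝ} (hx : x ∈ Ico (D.node n) (D.node (n + 1))) :
    D.toFun x = D.piece n x := by
  rw [toFun, D.strictMono_node.eq_of_mem_Ico (D.exists_mem_Ico x).choose_spec hx]

theorem toFun_mem_Ico {n : ℤ} {x : ℝ} (hx : x ∈ Ico (D.node n) (D.node (n + 1))) :
    D.toFun x ∈ Ico (D.value n) (D.value (n + 1)) := by
  have hle : D.node n ≤ D.node (n + 1) := D.strictMono_node.monotone (by omega)
  rw [toFun_eq hx, ← D.piece_node, ← D.piece_node_succ]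
  exact ⟨(D.strictMonoOn_piece n).monotoneOn ⟨le_rfl, hle⟩ (Ico_subset_Icc_self hx) hx.1,
    D.strictMonoOn_piece n (Ico_subset_Icc_self hx) ⟨hle, le_rfl⟩ hx.2⟩

variable (D)

theorem strictMono_value : StrictMono D.value :=
  strictMono_int_of_lt_succ fun n => by
    rw [← D.piece_node, ← D.piece_node_succ]
    have hlt := D.strictMono_node (lt_add_one n)
    exact D.strictMonoOn_piece n ⟨le_rfl, hlt.le⟩ ⟨hlt.le, le_rfl⟩ hlt

theorem strictMono_toFun : StrictMono D.toFun := by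
  intro x y hxy
  obtain ⟨n, hn⟩ := D.exists_mem_Ico x
  obtain ⟨m, hm⟩ := D.exists_mem_Ico y
  rcases lt_trichotomy n m with h | rfl | h
  · calc D.toFun x < D.value (n + 1) := (toFun_mem_Ico hn).2
      _ ≤ D.value m := D.strictMono_value.monotone (by omega)
      _ ≤ D.toFun y := (toFun_mem_Ico hm).1
  · rw [toFun_eq hn, toFun_eq hm]
    exact D.strictMonoOn_piece n (Ico_subset_Icc_self hn) (Ico_subset_Icc_self hm) hxy
  · have := D.strictMono_node.monotone (show m + 1 ≤ n by omega)
    exact absurd (hn.1.trans_lt (hxy.trans hm.2)) this.not_gt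

theorem surjective_toFun : Function.Surjective D.toFun := by
  intro y
  obtain ⟨m, hm⟩ := exists_mem_Ico_of_tendsto D.tendsto_value_atBot D.tendsto_value_atTop y
  have hle : D.node m ≤ D.node (m + 1) := D.strictMono_node.monotone (by omega)
  obtain ⟨x, hx, rfl⟩ := intermediate_value_Icc hle (D.continuousOn_piece m)
    (by rw [D.piece_node, D.piece_node_succ]; exact Ico_subset_Icc_self hm)
  have hne : x ≠ D.node (m + 1) := by
    rintro rfl
    exact hm.2.ne (D.piece_node_succ m)
  exact ⟨x, toFun_eq ⟨hx.1, lt_of_le_of_ne hx.2 hne⟩⟩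

theorem breaks_toFun_subset : breaks D.toFun ⊆
    range D.node ∪ ⋃ n, breaks (D.piece n) ∩ Ioo (D.node n) (D.node (n + 1)) := by
  intro y hy
  obtain ⟨n, hn⟩ := D.exists_mem_Ico y
  rcases hn.1.eq_or_lt with h | h
  · exact Or.inl ⟨n, h⟩
  · refine Or.inr (mem_iUnion.2 ⟨n, fun hla => hy (hla.congr ?_), h, hn.2⟩)
    filter_upwards [Ioo_mem_nhds h hn.2] with z hz
    exact (toFun_eq (Ioo_subset_Ico_self hz)).symm

theorem locallyFiniteBreaks_toFun : LocallyFiniteBreaks D.toFun := by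
  intro a b
  obtain ⟨N, hN⟩ := (D.tendsto_node_atBot.eventually_le_atBot a).exists
  obtain ⟨M, hM⟩ := (D.tendsto_node_atTop.eventually_ge_atTop b).exists
  refine (((finite_Icc N M).image D.node).union ((Finset.Ico N M).finite_toSet.biUnion
    fun n _ => D.finite_breaks_piece n)).subset ?_
  rintro y ⟨hy, hya, hyb⟩
  rcases D.breaks_toFun_subset hy with ⟨n, rfl⟩ | hy
  · exact Or.inl ⟨n, ⟨D.strictMono_node.le_iff_le.1 (hN.trans hya),
      D.strictMono_node.le_iff_le.1 (hyb.trans hM)⟩, rfl⟩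
  · obtain ⟨n, hyn, hn⟩ := mem_iUnion.1 hy
    have h1 : N < n + 1 := D.strictMono_node.lt_iff_lt.1 ((hN.trans hya).trans_lt hn.2)
    have h2 : n < M := D.strictMono_node.lt_iff_lt.1 (hn.1.trans_le (hyb.trans hM))
    exact Or.inr (mem_biUnion (Finset.mem_coe.2 (Finset.mem_Ico.2 ⟨by omega, h2⟩)) ⟨hyn, hn⟩)

noncomputable def toPerm : Equiv.Perm ℝ :=
  Equiv.ofBijective D.toFun ⟨D.strictMono_toFun.injective, D.surjective_toFun⟩

@[simp]
theorem toPerm_apply (x : ℝ) : D.toPerm x = D.toFun x := rfl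

theorem toPerm_mem : D.toPerm ∈ PLPlus :=
  ⟨D.strictMono_toFun, D.locallyFiniteBreaks_toFun⟩

section Affine

variable (node value : ℤ → ℝ) (hnode : StrictMono node) (hvalue : StrictMono value)
  (hnode_bot : Tendsto node atBot atBot) (hnode_top : Tendsto node atTop atTop)
  (hvalue_bot : Tendsto value atBot atBot) (hvalue_top : Tendsto value atTop atTop)

noncomputable def slope (n : ℤ) : ℝ := (value (n + 1) - value n) / (node (n + 1) - node n)

noncomputable def affine : Gluing where
  node := node
  value := value
  piece n x := value n + slope node value n * (x - node n)
  strictMono_node := hnode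
  tendsto_node_atBot := hnode_bot
  tendsto_node_atTop := hnode_top
  tendsto_value_atBot := hvalue_bot
  tendsto_value_atTop := hvalue_top
  piece_node n := by ring
  piece_node_succ n := by
    have := (sub_pos.2 (hnode (lt_add_one n))).ne'
    simp only [slope]
    field_simp
    ring
  strictMonoOn_piece n x _ y _ hxy := by
    have := div_pos (sub_pos.2 (hvalue (lt_add_one n))) (sub_pos.2 (hnode (lt_add_one n)))
    simp only [slope]
    nlinarith
  continuousOn_piece n := by fun_prop
  finite_breaks_piece n := by
    convert (finite_empty (α := ℝ)).inter_of_left (Ioo (node n) (node (n + 1)))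
    convert breaks_affine (slope node value n) (value n - slope node value n * node n) using 2
    ext x
    ring

variable {node value hnode hvalue hnode_bot hnode_top hvalue_bot hvalue_top}

theorem affine_toFun_eq {n : ℤ} {a b c d x : ℝ} (ha : node n = a) (hb : node (n + 1) = b)
    (hc : value n = c) (hd : value (n + 1) = d) (hx : x ∈ Ico a b) :
    (affine node value hnode hvalue hnode_bot hnode_top hvalue_bot hvalue_top).toFun x =
      c + (d - c) / (b - a) * (x - a) := by
  subst ha hb hc hd
  exact toFun_eq (D := affine ..) hx

end Affine

end Gluing

theorem PLPlus.tendsto_atBot {f : Equiv.Perm ℝ} (hf : f ∈ PLPlus) : Tendsto f atBot atBot :=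
  OrderIso.tendsto_atBot ⟨f, hf.1.le_iff_le⟩

theorem exists_eq_mul_inv_of_mem {f : Equiv.Perm ℝ} (hf : f ∈ PLPlus) :
    ∃ u ∈ PLPlus, ∃ v ∈ PLPlus, (∀ x, x < u x) ∧ (∀ x, x < v x) ∧ f = u * v⁻¹ := by
  set g : ℤ → ℝ := fun n => max ((n : ℝ) + 1) (f ((n : ℝ) + 1))
  have hshift : Tendsto (fun n : ℤ => (n : ℝ) + 1) atBot atBot :=
    tendsto_atBot_add_const_right _ 1 tendsto_intCast_atBot_atBot
  have hg_bot : Tendsto g atBot atBot := tendsto_atBot.2 fun b =>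
    ((tendsto_atBot.1 hshift b).and (tendsto_atBot.1 ((PLPlus.tendsto_atBot hf).comp hshift) b))
      |>.mono fun _ h => max_le h.1 h.2
  have hg_top : Tendsto g atTop atTop := tendsto_atTop_mono (fun _ => le_max_left _ _)
    (tendsto_atTop_add_const_right _ 1 tendsto_intCast_atTop_atTop)
  set D := Gluing.affine (fun n => n) g Int.cast_strictMono
    (strictMono_int_of_lt_succ fun n =>
      max_lt_max (by push_cast; linarith) (hf.1 (by push_cast; linarith)))
    tendsto_intCast_atBot_atBot tendsto_intCast_atTop_atTop hg_bot hg_top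
  have hD : ∀ x, x < D.toPerm x ∧ f x < D.toPerm x := by
    intro x
    have hx : x ∈ Ico (D.node ⌊x⌋) (D.node (⌊x⌋ + 1)) := by
      simpa [D, Gluing.affine] using And.intro (Int.floor_le x) (Int.lt_floor_add_one x)
    have hmax : max ((⌊x⌋ : ℝ) + 1) (f ((⌊x⌋ : ℝ) + 1)) ≤ D.toPerm x :=
      (Gluing.toFun_mem_Ico hx).1
    exact ⟨(Int.lt_floor_add_one x).trans_le ((le_max_left _ _).trans hmax),
      (hf.1 (Int.lt_floor_add_one x)).trans_le ((le_max_right _ _).trans hmax)⟩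
  refine ⟨D.toPerm, D.toPerm_mem, f⁻¹ * D.toPerm, mul_mem (inv_mem hf) D.toPerm_mem,
    fun x => (hD x).1, fun x => ?_, by group⟩
  simpa using (PLPlus.strictMono (inv_mem hf)) (hD x).2

noncomputable def translation : Equiv.Perm ℝ := Equiv.addRight 1

@[simp]
theorem translation_apply (x : ℝ) : translation x = x + 1 := rfl

@[simp]
theorem translation_symm_apply (x : ℝ) : translation.symm x = x - 1 := by
  rw [Equiv.symm_apply_eq]; simp

theorem translation_mem : translation ∈ PLPlus :=
  ⟨fun _ _ h => by simpa using h, by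
    convert locallyFiniteBreaks_affine 1 1 using 1; funext x; simp⟩

theorem breaks_affine_comp_subset (a b : ℝ) (g : ℝ → ℝ) :
    breaks (fun x => a * g x + b) ⊆ breaks g := fun x hx hg =>
  hx ((isLocallyAffineAt_affine a b (g x)).comp hg)

section Conjugacy

variable {w : Equiv.Perm ℝ}

theorem strictMono_zpow_apply_zero (hlt : ∀ x, x < w x) : StrictMono fun k : ℤ => (w ^ k) 0 :=
  strictMono_int_of_lt_succ fun k => by rw [w.zpow_succ_apply]; exact hlt _

theorem tendsto_zpow_apply_zero (hw : Continuous w) (hlt : ∀ x, x < w x) :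
    Tendsto (fun k : ℤ => (w ^ k) 0) atBot atBot ∧ Tendsto (fun k : ℤ => (w ^ k) 0) atTop atTop :=
  (strictMono_zpow_apply_zero hlt).monotone.tendsto_atBot_atTop_of_succ_eq
    hw (fun x => (hlt x).ne') (fun k => w.zpow_succ_apply k 0)

-- `w ^ (-k)` carries the fundamental domain `[w^k 0, w^(k+1) 0]` onto `[0, w 0]`, which is then
-- rescaled onto `[0, 1]`.
noncomputable def translationConjugacy (hw : w ∈ PLPlus) (hlt : ∀ x, x < w x) : Gluing where
  node k := (w ^ k) 0
  value k := k
  piece k x := (w 0)⁻¹ * (w ^ (-k)) x + k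
  strictMono_node := strictMono_zpow_apply_zero hlt
  tendsto_node_atBot := (tendsto_zpow_apply_zero (PLPlus.continuous hw) hlt).1
  tendsto_node_atTop := (tendsto_zpow_apply_zero (PLPlus.continuous hw) hlt).2
  tendsto_value_atBot := tendsto_intCast_atBot_atBot
  tendsto_value_atTop := tendsto_intCast_atTop_atTop
  piece_node k := by
    simp only [w.zpow_apply_zpow_apply, neg_add_cancel, zpow_zero, Equiv.Perm.one_apply]
    ring
  piece_node_succ k := by
    rw [w.zpow_apply_zpow_apply, neg_add_cancel_left, zpow_one, inv_mul_cancel₀ (hlt 0).ne']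
    push_cast
    ring
  strictMonoOn_piece k x _ y _ hxy := by
    have := inv_pos.2 (hlt 0)
    have := PLPlus.strictMono (zpow_mem hw (-k)) hxy
    dsimp only
    nlinarith
  continuousOn_piece k := ((PLPlus.continuous (zpow_mem hw (-k))).const_mul _ |>.add
    continuous_const).continuousOn
  finite_breaks_piece k := ((zpow_mem hw (-k)).2 ((w ^ k) 0) ((w ^ (k + 1)) 0)).subset
    (inter_subset_inter (breaks_affine_comp_subset _ _ _) Ioo_subset_Icc_self)

theorem translationConjugacy_toFun_apply (hw : w ∈ PLPlus) (hlt : ∀ x, x < w x) (x : ℝ) :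
    (translationConjugacy hw hlt).toFun (w x) = (translationConjugacy hw hlt).toFun x + 1 := by
  set D := translationConjugacy hw hlt
  obtain ⟨k, hk⟩ := D.exists_mem_Ico x
  have hwk : w x ∈ Ico (D.node (k + 1)) (D.node (k + 1 + 1)) := by
    simp only [D, translationConjugacy, w.zpow_succ_apply] at hk ⊢
    exact ⟨hw.1.monotone hk.1, hw.1 hk.2⟩
  rw [Gluing.toFun_eq hk, Gluing.toFun_eq hwk]
  have hpull : (w ^ (-(k + 1))) (w x) = (w ^ (-k)) x := by
    simpa using w.zpow_apply_zpow_apply (-(k + 1)) 1 x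
  simp only [D, translationConjugacy, hpull]
  push_cast
  ring

theorem exists_eq_conj_translation (hw : w ∈ PLPlus) (hlt : ∀ x, x < w x) :
    ∃ χ ∈ PLPlus, w = χ⁻¹ * translation * χ := by
  refine ⟨_, (translationConjugacy hw hlt).toPerm_mem, ?_⟩
  rw [mul_assoc, eq_inv_mul_iff_mul_eq]
  ext x
  simp [translationConjugacy_toFun_apply]

end Conjugacy

section Reversible

variable {G : Type*} [Group G] {H : Subgroup G} {g x : G}

def IsReversibleIn (H : Subgroup G) (g : G) : Prop := g ∈ H ∧ ∃ h ∈ H, h * g * h⁻¹ = g⁻¹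

theorem isReversibleIn_of_mul_mul_eq {h : G} (hg : g ∈ H) (hh : h ∈ H) (heq : g * h * g = h) :
    IsReversibleIn H g :=
  ⟨hg, h⁻¹, inv_mem hh, by
    calc h⁻¹ * g * h⁻¹⁻¹ = h⁻¹ * (g * h * g) * g⁻¹ := by group
      _ = g⁻¹ := by rw [heq]; group⟩

theorem IsReversibleIn.inv (hg : IsReversibleIn H g) : IsReversibleIn H g⁻¹ := by
  obtain ⟨hgH, h, hh, heq⟩ := hg
  refine ⟨inv_mem hgH, h, hh, ?_⟩
  calc h * g⁻¹ * h⁻¹ = (h * g * h⁻¹)⁻¹ := by group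
    _ = g⁻¹⁻¹ := by rw [heq]

theorem IsReversibleIn.conj (hg : IsReversibleIn H g) (hx : x ∈ H) :
    IsReversibleIn H (x⁻¹ * g * x) := by
  obtain ⟨hgH, h, hh, heq⟩ := hg
  refine ⟨mul_mem (mul_mem (inv_mem hx) hgH) hx, x⁻¹ * h * x,
    mul_mem (mul_mem (inv_mem hx) hh) hx, ?_⟩
  calc x⁻¹ * h * x * (x⁻¹ * g * x) * (x⁻¹ * h * x)⁻¹ = x⁻¹ * (h * g * h⁻¹) * x := by group
    _ = (x⁻¹ * g * x)⁻¹ := by rw [heq]; group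

theorem isReversibleIn_PLPlus_iff {g : Equiv.Perm ℝ} : IsReversibleIn PLPlus g ↔
    InPL g ∧ StrictMono g ∧ ∃ h : Equiv.Perm ℝ, InPL h ∧ StrictMono h ∧ h * g * h⁻¹ = g⁻¹ := by
  simp only [IsReversibleIn, mem_PLPlus_iff, and_assoc]

end Reversible

namespace Translation

-- `A` fixes `2ℤ`. Its nodes `nodeA 1` and values `nodeA (-1)` are mirror images of each other, so
-- on `[4k + 2, 4k + 4]` it is the inverse of its restriction to `[4k, 4k + 2]` translated by 2:
-- this is `A (A x + 2) = x + 2`.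
noncomputable def offsetA (n : ℤ) : ℝ :=
  if n % 4 = 1 then -3 / 5 else if n % 4 = 3 then 3 / 5 else 0

theorem abs_offsetA_le (n : ℤ) : |offsetA n| ≤ 3 / 5 := by
  unfold offsetA; split_ifs <;> norm_num [abs_of_nonneg]

theorem offsetA_four_mul_add (k i : ℤ) : offsetA (4 * k + i) = offsetA i := by
  simp [offsetA]

noncomputable def nodeA (s : ℝ) (n : ℤ) : ℝ := n + s * offsetA n

theorem nodeA_four_mul_add (s : ℝ) (k i : ℤ) :
    nodeA s (4 * k + i) = 4 * k + (i + s * offsetA i) := by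
  simp [nodeA, offsetA_four_mul_add]
  ring

theorem strictMono_nodeA (s : ℝ) (hs : s = 1 ∨ s = -1) : StrictMono (nodeA s) := by
  refine strictMono_int_of_lt_succ fun n => ?_
  have : n % 4 = 0 ∧ (n + 1) % 4 = 1 ∨ n % 4 = 1 ∧ (n + 1) % 4 = 2 ∨
      n % 4 = 2 ∧ (n + 1) % 4 = 3 ∨ n % 4 = 3 ∧ (n + 1) % 4 = 0 := by omega
  rcases hs with rfl | rfl <;>
  rcases this with ⟨h1, h2⟩ | ⟨h1, h2⟩ | ⟨h1, h2⟩ | ⟨h1, h2⟩ <;>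
  simp [nodeA, offsetA, h1, h2] <;> linarith

theorem tendsto_nodeA (s : ℝ) (hs : s = 1 ∨ s = -1) :
    Tendsto (nodeA s) atBot atBot ∧ Tendsto (nodeA s) atTop atTop :=
  tendsto_atBot_atTop_of_abs_sub_le one_pos fun n => by
    rcases hs with rfl | rfl <;> simpa [nodeA] using abs_offsetA_le n

noncomputable def A : Equiv.Perm ℝ :=
  (Gluing.affine (nodeA 1) (nodeA (-1)) (strictMono_nodeA 1 (.inl rfl))
    (strictMono_nodeA (-1) (.inr rfl)) (tendsto_nodeA 1 (.inl rfl)).1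
    (tendsto_nodeA 1 (.inl rfl)).2 (tendsto_nodeA (-1) (.inr rfl)).1
    (tendsto_nodeA (-1) (.inr rfl)).2).toPerm

theorem A_mem : A ∈ PLPlus := Gluing.toPerm_mem _

theorem A_apply_of_mem {n : ℤ} {a b c d x : ℝ} (ha : nodeA 1 n = a) (hb : nodeA 1 (n + 1) = b)
    (hc : nodeA (-1) n = c) (hd : nodeA (-1) (n + 1) = d) (hx : x ∈ Ico a b) :
    A x = c + (d - c) / (b - a) * (x - a) :=
  Gluing.affine_toFun_eq ha hb hc hd hx

theorem A_apply_of_mem₀ (k : ℤ) {x : ℝ} (h₁ : 4 * k ≤ x) (h₂ : x < 4 * k + 2 / 5) :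
    A x = 4 * k + 4 * (x - 4 * k) := by
  rw [A_apply_of_mem (n := 4 * k) (c := 4 * k) (d := 4 * k + 8 / 5)
    (by simpa [offsetA] using nodeA_four_mul_add 1 k 0)
    (by simp [nodeA_four_mul_add, offsetA]; norm_num)
    (by simpa [offsetA] using nodeA_four_mul_add (-1) k 0)
    (by simp [nodeA_four_mul_add, offsetA]; norm_num) ⟨h₁, h₂⟩]
  ring

theorem A_apply_of_mem₁ (k : ℤ) {x : ℝ} (h₁ : 4 * k + 2 / 5 ≤ x) (h₂ : x < 4 * k + 2) :
    A x = 4 * k + 8 / 5 + (x - (4 * k + 2 / 5)) / 4 := by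
  rw [A_apply_of_mem (n := 4 * k + 1) (c := 4 * k + 8 / 5) (d := 4 * k + 2)
    (by simp [nodeA_four_mul_add, offsetA]; norm_num)
    (by simp [add_assoc, nodeA_four_mul_add, offsetA])
    (by simp [nodeA_four_mul_add, offsetA]; norm_num)
    (by simp [add_assoc, nodeA_four_mul_add, offsetA]) ⟨h₁, h₂⟩]
  ring

theorem A_apply_of_mem₂ (k : ℤ) {x : ℝ} (h₁ : 4 * k + 2 ≤ x) (h₂ : x < 4 * k + 18 / 5) :
    A x = 4 * k + 2 + (x - (4 * k + 2)) / 4 := by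
  rw [A_apply_of_mem (n := 4 * k + 2) (c := 4 * k + 2) (d := 4 * k + 12 / 5)
    (by simp [nodeA_four_mul_add, offsetA])
    (by simp [add_assoc, nodeA_four_mul_add, offsetA]; norm_num)
    (by simp [nodeA_four_mul_add, offsetA])
    (by simp [add_assoc, nodeA_four_mul_add, offsetA]; norm_num) ⟨h₁, h₂⟩]
  ring

theorem A_apply_of_mem₃ (k : ℤ) {x : ℝ} (h₁ : 4 * k + 18 / 5 ≤ x) (h₂ : x < 4 * k + 4) :
    A x = 4 * k + 12 / 5 + 4 * (x - (4 * k + 18 / 5)) := by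
  rw [A_apply_of_mem (n := 4 * k + 3) (c := 4 * k + 12 / 5) (d := 4 * k + 4)
    (by simp [nodeA_four_mul_add, offsetA]; norm_num)
    (by simp [add_assoc, nodeA_four_mul_add, offsetA])
    (by simp [nodeA_four_mul_add, offsetA]; norm_num)
    (by simp [add_assoc, nodeA_four_mul_add, offsetA]) ⟨h₁, h₂⟩]
  ring

-- `nodeK` enumerates the fixed points `4ℤ + {1/3, 2/3}` of `A⁻¹ * translation`; `K` moves each
-- of them to the next one.
noncomputable def nodeK (n : ℤ) : ℝ := 2 * n + if n % 2 = 0 then 1 / 3 else -4 / 3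

theorem nodeK_two_mul (k : ℤ) : nodeK (2 * k) = 4 * k + 1 / 3 := by
  simp [nodeK]
  ring

theorem nodeK_two_mul_add_one (k : ℤ) : nodeK (2 * k + 1) = 4 * k + 2 / 3 := by
  simp [nodeK]
  ring

theorem nodeK_two_mul_add_two (k : ℤ) : nodeK (2 * k + 1 + 1) = 4 * k + 13 / 3 := by
  rw [add_assoc, show (1 + 1 : ℤ) = 2 * 1 by rfl, ← mul_add, nodeK_two_mul]
  push_cast
  ring

theorem nodeK_two_mul_add_three (k : ℤ) : nodeK (2 * k + 1 + 1 + 1) = 4 * k + 14 / 3 := by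
  rw [add_assoc, add_assoc, show (1 + (1 + 1) : ℤ) = 2 * 1 + 1 by rfl, ← add_assoc, ← mul_add,
    nodeK_two_mul_add_one]
  push_cast
  ring

theorem strictMono_nodeK : StrictMono nodeK := by
  refine strictMono_int_of_lt_succ fun n => ?_
  rcases Int.even_or_odd' n with ⟨k, rfl | rfl⟩
  · rw [nodeK_two_mul, nodeK_two_mul_add_one]; linarith
  · rw [nodeK_two_mul_add_one, nodeK_two_mul_add_two]; linarith

theorem tendsto_nodeK : Tendsto nodeK atBot atBot ∧ Tendsto nodeK atTop atTop :=
  tendsto_atBot_atTop_of_abs_sub_le (B := 4 / 3) two_pos fun n => by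
    unfold nodeK; split_ifs <;> norm_num [abs_of_nonneg]

theorem tendsto_nodeK_succ :
    Tendsto (fun n => nodeK (n + 1)) atBot atBot ∧ Tendsto (fun n => nodeK (n + 1)) atTop atTop :=
  ⟨tendsto_nodeK.1.comp (tendsto_atBot_add_const_right _ 1 tendsto_id),
    tendsto_nodeK.2.comp (tendsto_atTop_add_const_right _ 1 tendsto_id)⟩

noncomputable def K : Equiv.Perm ℝ :=
  (Gluing.affine nodeK (fun n => nodeK (n + 1)) strictMono_nodeK
    (strictMono_nodeK.comp fun _ _ h => by simpa using h) tendsto_nodeK.1 tendsto_nodeK.2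
    tendsto_nodeK_succ.1 tendsto_nodeK_succ.2).toPerm

theorem K_mem : K ∈ PLPlus := Gluing.toPerm_mem _

theorem K_apply_of_mem₀ (k : ℤ) {x : ℝ} (h₁ : 4 * k + 1 / 3 ≤ x) (h₂ : x < 4 * k + 2 / 3) :
    K x = 4 * k + 2 / 3 + 11 * (x - (4 * k + 1 / 3)) := by
  rw [K, Gluing.toPerm_apply, Gluing.affine_toFun_eq (n := 2 * k) (nodeK_two_mul k)
    (nodeK_two_mul_add_one k) (nodeK_two_mul_add_one k) (nodeK_two_mul_add_two k) ⟨h₁, h₂⟩]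
  ring

theorem K_apply_of_mem₁ (k : ℤ) {x : ℝ} (h₁ : 4 * k + 2 / 3 ≤ x) (h₂ : x < 4 * k + 13 / 3) :
    K x = 4 * k + 13 / 3 + (x - (4 * k + 2 / 3)) / 11 := by
  rw [K, Gluing.toPerm_apply, Gluing.affine_toFun_eq (n := 2 * k + 1)
    (nodeK_two_mul_add_one k) (nodeK_two_mul_add_two k) (nodeK_two_mul_add_two k)
    (nodeK_two_mul_add_three k) ⟨h₁, h₂⟩]
  ring

theorem exists_four_mul_le (x : ℝ) : ∃ k : ℤ, 4 * (k : ℝ) ≤ x ∧ x < 4 * k + 4 :=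
  ⟨⌊x / 4⌋, by linarith [Int.floor_le (x / 4)], by linarith [Int.lt_floor_add_one (x / 4)]⟩

theorem A_apply_A_add_two (x : ℝ) : A (A x + 2) = x + 2 := by
  obtain ⟨k, h₁, h₂⟩ := exists_four_mul_le x
  have hk : ((k + 1 : ℤ) : ℝ) = k + 1 := by push_cast; ring
  rcases lt_or_ge x (4 * k + 2 / 5) with h₃ | h₃
  · rw [A_apply_of_mem₀ k h₁ h₃, A_apply_of_mem₂ k (by linarith) (by linarith)]; ring
  rcases lt_or_ge x (4 * k + 2) with h₄ | h₄
  · rw [A_apply_of_mem₁ k h₃ h₄, A_apply_of_mem₃ k (by linarith) (by linarith)]; ring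
  rcases lt_or_ge x (4 * k + 18 / 5) with h₅ | h₅
  · rw [A_apply_of_mem₂ k h₄ h₅, A_apply_of_mem₀ (k + 1) (by rw [hk]; linarith)
      (by rw [hk]; linarith), hk]; ring
  · rw [A_apply_of_mem₃ k h₅ h₂, A_apply_of_mem₁ (k + 1) (by rw [hk]; linarith)
      (by rw [hk]; linarith), hk]; ring

theorem A_K_A_sub_one (y : ℝ) : A (K (A y - 1)) = K y + 1 := by
  obtain ⟨k, h₁, h₂⟩ := exists_four_mul_le y
  have hk : ((k + 1 : ℤ) : ℝ) = k + 1 := by push_cast; ring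
  have hk' : ((k - 1 : ℤ) : ℝ) = k - 1 := by push_cast; ring
  rcases lt_or_ge y (4 * k + 2 / 5) with h₃ | h₃
  · rw [A_apply_of_mem₀ k h₁ h₃]
    rcases lt_or_ge y (4 * k + 1 / 3) with h₄ | h₄
    · rw [K_apply_of_mem₁ (k - 1) (by rw [hk']; linarith) (by rw [hk']; linarith),
        K_apply_of_mem₁ (k - 1) (by rw [hk']; linarith) (by rw [hk']; linarith), hk',
        A_apply_of_mem₁ k (by linarith) (by linarith)]; ring
    rw [K_apply_of_mem₀ k (by linarith) (by linarith), K_apply_of_mem₀ k h₄ (by linarith)]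
    rcases lt_or_ge y (4 * k + 4 / 11) with h₅ | h₅
    · rw [A_apply_of_mem₁ k (by linarith) (by linarith)]; ring
    · rw [A_apply_of_mem₂ k (by linarith) (by linarith)]; ring
  rcases lt_or_ge y (4 * k + 2) with h₄ | h₄
  · rw [A_apply_of_mem₁ k h₃ h₄]
    rcases lt_or_ge y (4 * k + 2 / 3) with h₅ | h₅
    · rw [K_apply_of_mem₀ k (by linarith) (by linarith), K_apply_of_mem₀ k (by linarith) h₅]
      rcases lt_or_ge y (4 * k + 6 / 11) with h₆ | h₆
      · rw [A_apply_of_mem₃ k (by linarith) (by linarith)]; ring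
      · rw [A_apply_of_mem₀ (k + 1) (by rw [hk]; linarith) (by rw [hk]; linarith), hk]; ring
    · rw [K_apply_of_mem₁ k (by linarith) (by linarith), K_apply_of_mem₁ k h₅ (by linarith),
        A_apply_of_mem₀ (k + 1) (by rw [hk]; linarith) (by rw [hk]; linarith), hk]; ring
  rcases lt_or_ge y (4 * k + 18 / 5) with h₅ | h₅
  · rw [A_apply_of_mem₂ k h₄ h₅, K_apply_of_mem₁ k (by linarith) (by linarith),
      K_apply_of_mem₁ k (by linarith) (by linarith),
      A_apply_of_mem₀ (k + 1) (by rw [hk]; linarith) (by rw [hk]; linarith), hk]; ring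
  · rw [A_apply_of_mem₃ k h₅ h₂, K_apply_of_mem₁ k (by linarith) (by linarith),
      K_apply_of_mem₁ k (by linarith) (by linarith),
      A_apply_of_mem₁ (k + 1) (by rw [hk]; linarith) (by rw [hk]; linarith), hk]; ring

end Translation

namespace Translation

noncomputable def C : Equiv.Perm ℝ := A⁻¹ * translation

theorem isReversibleIn_A : IsReversibleIn PLPlus A :=
  isReversibleIn_of_mul_mul_eq A_mem (mul_mem translation_mem translation_mem) <| by
    ext x
    simpa [add_assoc, one_add_one_eq_two] using A_apply_A_add_two x

theorem isReversibleIn_C : IsReversibleIn PLPlus C := by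
  have hAK : A * K * translation⁻¹ * A = translation * K := by
    ext y
    simpa using A_K_A_sub_one y
  refine isReversibleIn_of_mul_mul_eq (mul_mem (inv_mem A_mem) translation_mem) K_mem ?_
  calc C * K * C = A⁻¹ * (translation * K) * A⁻¹ * translation := by simp only [C, mul_assoc]
    _ = K := by rw [← hAK]; group

theorem translation_eq_A_mul_C : translation = A * C := by simp [C]

end Translation

/-- PL⁺(ℝ) = R₄(PL⁺(ℝ)): every element of PL⁺(ℝ) is a composite of four elements of
PL⁺(ℝ), each reversible in PL⁺(ℝ). -/
theorem stmt_3 (f : Equiv.Perm ℝ) (hf : InPL f) (hfm : StrictMono (⇑f)) :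
    ∃ g₁ g₂ g₃ g₄ : Equiv.Perm ℝ,
      (InPL g₁ ∧ StrictMono (⇑g₁) ∧
        ∃ h : Equiv.Perm ℝ, InPL h ∧ StrictMono (⇑h) ∧ h * g₁ * h⁻¹ = g₁⁻¹) ∧
      (InPL g₂ ∧ StrictMono (⇑g₂) ∧
        ∃ h : Equiv.Perm ℝ, InPL h ∧ StrictMono (⇑h) ∧ h * g₂ * h⁻¹ = g₂⁻¹) ∧
      (InPL g₃ ∧ StrictMono (⇑g₃) ∧
        ∃ h : Equiv.Perm ℝ, InPL h ∧ StrictMono (⇑h) ∧ h * g₃ * h⁻¹ = g₃⁻¹) ∧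
      (InPL g₄ ∧ StrictMono (⇑g₄) ∧
        ∃ h : Equiv.Perm ℝ, InPL h ∧ StrictMono (⇑h) ∧ h * g₄ * h⁻¹ = g₄⁻¹) ∧
      f = g₁ * g₂ * g₃ * g₄ := by
  obtain ⟨u, hu, v, hv, hu_gt, hv_gt, rfl⟩ := exists_eq_mul_inv_of_mem (mem_PLPlus_iff.2 ⟨hf, hfm⟩)
  obtain ⟨χ, hχ, rfl⟩ := exists_eq_conj_translation hu hu_gt
  obtain ⟨ψ, hψ, rfl⟩ := exists_eq_conj_translation hv hv_gt
  open Translation in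
  refine ⟨χ⁻¹ * A * χ, χ⁻¹ * C * χ, ψ⁻¹ * C⁻¹ * ψ, ψ⁻¹ * A⁻¹ * ψ,
    isReversibleIn_PLPlus_iff.1 (isReversibleIn_A.conj hχ),
    isReversibleIn_PLPlus_iff.1 (isReversibleIn_C.conj hχ),
    isReversibleIn_PLPlus_iff.1 (isReversibleIn_C.inv.conj hψ),
    isReversibleIn_PLPlus_iff.1 (isReversibleIn_A.inv.conj hψ), ?_⟩
  rw [translation_eq_A_mul_C]
  group
end

section
/- Let f be a strictly increasing homeomorphism of ℝ. Then f is strongly reversible in H(ℝ) (i.e., there is an involution σ among the homeomorphisms of ℝ with σ ∘ f ∘ σ = f⁻¹) if and only if there is a strictly decreasing homeomorphism h of ℝ with h ∘ f ∘ h⁻¹ = f⁻¹. -/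
/-!
A decreasing homeomorphism `h` reversing `f` has a fixed point `p`. Replacing `f` by `f⁻¹` if
necessary, `p ≤ f p`. The translates `fⁿ [p, f p)` tile an interval `J` that is invariant under
`f` and `h`. On `J` an involution reversing `f` is obtained by reflecting the fundamental
domain, `fⁿ y ↦ f⁻ⁿ⁻¹ (p + f p - y)`; outside `J` (everywhere, if `f p = p`) one folds `h` at
`p`, using `h` to the right of `p` and `h⁻¹` to the left. A decreasing involution of `ℝ` is a
homeomorphism.

Conversely, a continuous involution is monotone; if it is increasing it is the identity, so
`f = f⁻¹`, hence `f = id`, which is reversed by `x ↦ -x`.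
-/

open Function Set Equiv

def Reverses {G : Type*} [Group G] (h f : G) : Prop := h * f * h⁻¹ = f⁻¹

namespace Reverses

variable {G : Type*} [Group G] {h f : G}

theorem inv (H : Reverses h f) : Reverses h⁻¹ f :=
  calc h⁻¹ * f * h⁻¹⁻¹ = h⁻¹ * f⁻¹⁻¹ * h := by simp
    _ = h⁻¹ * (h * f * h⁻¹)⁻¹ * h := by rw [H]
    _ = f⁻¹ := by group

theorem zpow (H : Reverses h f) (n : ℤ) : Reverses h (f ^ n) := by
  rw [Reverses, ← conj_zpow, H, inv_zpow]

theorem inv_right (H : Reverses h f) : Reverses h f⁻¹ := by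
  simpa only [zpow_neg_one] using H.zpow (-1)

theorem apply_apply {α : Type*} {h f : Perm α} (H : Reverses h f) (x : α) :
    h (f x) = f⁻¹ (h x) := by
  rw [← H]; simp

theorem apply_zpow_apply_of_apply_eq {α : Type*} {h f : Perm α} {p : α} (H : Reverses h f)
    (hp : h p = p) (k : ℤ) : h ((f ^ k) p) = (f ^ (-k)) p := by
  rw [(H.zpow k).apply_apply, hp, zpow_neg]

end Reverses

namespace Equiv.Perm

variable {α : Type*}

theorem zpow_apply_zpow_apply_s5 (f : Perm α) (m n : ℤ) (x : α) :
    (f ^ m) ((f ^ n) x) = (f ^ (m + n)) x := by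
  rw [zpow_add, mul_apply]

theorem zpow_apply_apply (f : Perm α) (n : ℤ) (x : α) : (f ^ n) (f x) = (f ^ (n + 1)) x := by
  rw [zpow_add_one, mul_apply]

theorem apply_zpow_apply (f : Perm α) (n : ℤ) (x : α) : f ((f ^ n) x) = (f ^ (n + 1)) x := by
  rw [← mul_apply, ← zpow_one_add, add_comm]

theorem inv_apply_zpow_apply (f : Perm α) (n : ℤ) (x : α) :
    f⁻¹ ((f ^ n) x) = (f ^ (n - 1)) x := by
  rw [← zpow_neg_one, zpow_apply_zpow_apply_s5, neg_add_eq_sub]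

variable [LinearOrder α]

theorem strictMono_inv {f : Perm α} (hf : StrictMono f) : StrictMono ⇑f⁻¹ :=
  fun a b hab => hf.lt_iff_lt.mp (by simpa using hab)

theorem strictAnti_inv {h : Perm α} (hh : StrictAnti h) : StrictAnti ⇑h⁻¹ :=
  fun a b hab => hh.lt_iff_gt.mp (by simpa using hab)

theorem strictMono_zpow {f : Perm α} (hf : StrictMono f) (n : ℤ) : StrictMono ⇑(f ^ n) := by
  induction n using Int.induction_on with
  | zero => simpa using strictMono_id
  | succ n ih => rw [zpow_add_one, coe_mul]; exact ih.comp hf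
  | pred n ih => rw [zpow_sub_one, coe_mul]; exact ih.comp (strictMono_inv hf)

theorem eq_one_of_monotone_of_mul_self {g : Perm α} (hg : Monotone g) (hgg : g * g = 1) :
    g = 1 := by
  have hinv (x : α) : g (g x) = x := by simpa using congr($hgg x)
  ext x
  rcases le_total (g x) x with hx | hx
  · exact le_antisymm hx (by simpa [hinv] using hg hx)
  · exact le_antisymm (by simpa [hinv] using hg hx) hx

end Equiv.Perm

section Orbit

open Equiv.Perm

variable {α : Type*} [LinearOrder α] {f h : Perm α} {p x y z : α}

theorem monotone_zpow_apply (hf : StrictMono f) (hpf : p ≤ f p) :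
    Monotone fun n : ℤ => (f ^ n) p :=
  monotone_int_of_le_succ fun n => by
    simpa [zpow_add_one] using (strictMono_zpow hf n).monotone hpf

def orbitHull (f : Perm α) (p : α) : Set α := ⋃ n : ℤ, ⇑(f ^ n) '' Ico p (f p)

theorem mem_orbitHull :
    x ∈ orbitHull f p ↔ ∃ n : ℤ, ∃ y ∈ Ico p (f p), (f ^ n) y = x := by
  simp only [orbitHull, mem_iUnion, mem_image]

theorem zpow_apply_mem_orbitHull (hy : y ∈ Ico p (f p)) (n : ℤ) : (f ^ n) y ∈ orbitHull f p :=
  mem_orbitHull.2 ⟨n, y, hy, rfl⟩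

theorem zpow_apply_mem_orbitHull_of_mem_Icc (hpf : p < f p) (hy : y ∈ Icc p (f p)) (n : ℤ) :
    (f ^ n) y ∈ orbitHull f p := by
  rcases hy.2.lt_or_eq with hlt | rfl
  · exact zpow_apply_mem_orbitHull ⟨hy.1, hlt⟩ n
  · rw [zpow_apply_apply]
    exact zpow_apply_mem_orbitHull (left_mem_Ico.2 hpf) _

theorem apply_mem_orbitHull_iff : f x ∈ orbitHull f p ↔ x ∈ orbitHull f p := by
  simp only [mem_orbitHull]
  constructor
  · rintro ⟨n, y, hy, hfx⟩
    exact ⟨n - 1, y, hy, by rw [← inv_apply_zpow_apply, hfx]; simp⟩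
  · rintro ⟨n, y, hy, rfl⟩
    exact ⟨n + 1, y, hy, (apply_zpow_apply f n y).symm⟩

theorem zpow_apply_lt_zpow_apply (hf : StrictMono f) (hpf : p ≤ f p) {m n : ℤ} (hmn : m < n)
    (hy : y < f p) (hz : p ≤ z) : (f ^ m) y < (f ^ n) z :=
  calc (f ^ m) y < (f ^ m) (f p) := strictMono_zpow hf m hy
    _ = (f ^ (m + 1)) p := zpow_apply_apply f m p
    _ ≤ (f ^ n) p := monotone_zpow_apply hf hpf (by omega)
    _ ≤ (f ^ n) z := (strictMono_zpow hf n).monotone hz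

theorem eq_of_zpow_apply_eq (hf : StrictMono f) (hpf : p ≤ f p) (hy : y ∈ Ico p (f p))
    (hz : z ∈ Ico p (f p)) {m n : ℤ} (hmn : (f ^ m) y = (f ^ n) z) : m = n := by
  rcases lt_trichotomy m n with hlt | heq | hgt
  · exact absurd hmn (zpow_apply_lt_zpow_apply hf hpf hlt hy.2 hz.1).ne
  · exact heq
  · exact absurd hmn (zpow_apply_lt_zpow_apply hf hpf hgt hz.2 hy.1).ne'

theorem zpow_apply_le_iff_of_not_mem_orbitHull (hf : StrictMono f) (hpf : p ≤ f p)
    (hx : x ∉ orbitHull f p) (k : ℤ) : (f ^ k) p ≤ x ↔ p ≤ x := by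
  have step (k : ℤ) : (f ^ (k + 1)) p ≤ x ↔ (f ^ k) p ≤ x := by
    refine ⟨(monotone_zpow_apply hf hpf (by omega : k ≤ k + 1)).trans, fun hk => ?_⟩
    obtain ⟨y, rfl⟩ : ∃ y, (f ^ k) y = x := ⟨(f ^ (-k)) x, by simp⟩
    rw [(strictMono_zpow hf k).le_iff_le] at hk
    rw [← zpow_apply_apply, (strictMono_zpow hf k).le_iff_le]
    by_contra hlt
    exact hx (zpow_apply_mem_orbitHull ⟨hk, not_le.mp hlt⟩ k)
  induction k using Int.induction_on with
  | zero => simp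
  | succ k ih => exact (step k).trans ih
  | pred k ih => exact (step (-k - 1)).symm.trans (by rwa [sub_add_cancel])

theorem apply_mem_orbitHull_of_reverses (hf : StrictMono f) (hh : StrictAnti h)
    (hrev : Reverses h f) (hp : h p = p) (hx : x ∈ orbitHull f p) : h x ∈ orbitHull f p := by
  obtain ⟨n, y, hy, rfl⟩ := mem_orbitHull.1 hx
  have hfhy : f (h y) ∈ Icc p (f p) := by
    constructor
    · calc p = f (h (f p)) := by rw [hrev.apply_apply, hp]; simp
        _ ≤ f (h y) := hf.monotone (hh.antitone hy.2.le)
    · exact hf.monotone (hp ▸ hh.antitone hy.1)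
  rw [(hrev.zpow n).apply_apply, ← zpow_neg, ← sub_add_cancel (-n) 1, ← zpow_apply_apply]
  exact zpow_apply_mem_orbitHull_of_mem_Icc (hy.1.trans_lt hy.2) hfhy _

theorem apply_mem_orbitHull_iff_of_reverses (hf : StrictMono f) (hh : StrictAnti h)
    (hrev : Reverses h f) (hp : h p = p) : h x ∈ orbitHull f p ↔ x ∈ orbitHull f p :=
  ⟨fun hx => by
    simpa using apply_mem_orbitHull_of_reverses hf (strictAnti_inv hh) hrev.inv
      (inv_eq_iff_eq.2 hp.symm) hx,
    apply_mem_orbitHull_of_reverses hf hh hrev hp⟩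

end Orbit

section Fold

open Equiv.Perm

variable {α : Type*} [LinearOrder α] {f h : Perm α} {p x : α}

def foldAt (h : Perm α) (p x : α) : α := if p ≤ x then h x else h⁻¹ x

theorem foldAt_of_le (hx : p ≤ x) : foldAt h p x = h x := if_pos hx

theorem foldAt_of_lt (hx : x < p) : foldAt h p x = h⁻¹ x := if_neg hx.not_ge

theorem foldAt_involutive (hh : StrictAnti h) (hp : h p = p) : Involutive (foldAt h p) := by
  intro x
  rcases lt_trichotomy x p with hx | rfl | hx
  · have : p < h⁻¹ x := inv_eq_iff_eq.2 hp.symm ▸ strictAnti_inv hh hx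
    rw [foldAt_of_lt hx, foldAt_of_le this.le]
    simp
  · simp [foldAt, hp]
  · have : h x < p := hp ▸ hh hx
    rw [foldAt_of_le hx.le, foldAt_of_lt this]
    simp

theorem foldAt_antitone (hh : StrictAnti h) (hp : h p = p) : Antitone (foldAt h p) := by
  intro x x' hxx'
  rcases le_or_gt p x with hx | hx
  · rw [foldAt_of_le hx, foldAt_of_le (hx.trans hxx')]
    exact hh.antitone hxx'
  rcases le_or_gt p x' with hx' | hx'
  · rw [foldAt_of_lt hx, foldAt_of_le hx']
    calc h x' ≤ h p := hh.antitone hx'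
      _ = h⁻¹ p := by rw [hp, eq_comm, inv_eq_iff_eq, hp]
      _ ≤ h⁻¹ x := (strictAnti_inv hh).antitone hx.le
  · rw [foldAt_of_lt hx, foldAt_of_lt hx']
    exact (strictAnti_inv hh).antitone hxx'

theorem foldAt_apply (hrev : Reverses h f) (hx : p ≤ x ↔ p ≤ f x) :
    foldAt h p (f x) = f⁻¹ (foldAt h p x) := by
  unfold foldAt
  split_ifs with h₁ h₂ h₂
  · exact hrev.apply_apply x
  · exact absurd (hx.2 h₁) h₂
  · exact absurd (hx.1 h₂) h₁
  · exact hrev.inv.apply_apply x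

theorem foldAt_mem_orbitHull_iff (hf : StrictMono f) (hh : StrictAnti h) (hrev : Reverses h f)
    (hp : h p = p) : foldAt h p x ∈ orbitHull f p ↔ x ∈ orbitHull f p := by
  unfold foldAt
  split_ifs
  · exact apply_mem_orbitHull_iff_of_reverses hf hh hrev hp
  · simpa using (apply_mem_orbitHull_iff_of_reverses hf hh hrev hp (x := h⁻¹ x)).symm

end Fold

section Reflection

open Equiv.Perm

variable {α : Type*} [AddCommGroup α] [LinearOrder α] {f h : Perm α} {p x y : α}

-- The chosen `n` satisfies `x ∈ fⁿ [p, f p)`.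
open Classical in
noncomputable def reverser (f h : Perm α) (p x : α) : α :=
  if hx : x ∈ orbitHull f p then
    (f ^ (-(mem_iUnion.1 hx).choose - 1)) (p + f p - (f ^ (-(mem_iUnion.1 hx).choose)) x)
  else foldAt h p x

theorem reverser_zpow_apply (hf : StrictMono f) (hpf : p ≤ f p) (hy : y ∈ Ico p (f p))
    (n : ℤ) : reverser f h p ((f ^ n) y) = (f ^ (-n - 1)) (p + f p - y) := by
  have hx := zpow_apply_mem_orbitHull (f := f) hy n
  rw [reverser, dif_pos hx]
  obtain ⟨z, hz, hzy⟩ := (mem_iUnion.1 hx).choose_spec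
  rw [eq_of_zpow_apply_eq hf hpf hz hy hzy, zpow_apply_zpow_apply_s5, neg_add_cancel, zpow_zero,
    one_apply]

theorem reverser_zpow_apply_of_mem_Icc (hf : StrictMono f) (hpf : p < f p)
    (hy : y ∈ Icc p (f p)) (n : ℤ) :
    reverser f h p ((f ^ n) y) = (f ^ (-n - 1)) (p + f p - y) := by
  rcases hy.2.lt_or_eq with hlt | rfl
  · exact reverser_zpow_apply hf hpf.le ⟨hy.1, hlt⟩ n
  · rw [zpow_apply_apply, reverser_zpow_apply hf hpf.le (left_mem_Ico.2 hpf), add_sub_cancel_left,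
      add_sub_cancel_right, zpow_apply_apply]
    congr 2; ring

theorem reverser_of_not_mem (hx : x ∉ orbitHull f p) : reverser f h p x = foldAt h p x :=
  dif_neg hx

theorem reverser_semiconj (hf : StrictMono f) (hrev : Reverses h f) (hpf : p ≤ f p) :
    Semiconj (reverser f h p) f ⇑f⁻¹ := by
  intro x
  by_cases hx : x ∈ orbitHull f p
  · obtain ⟨n, y, hy, rfl⟩ := mem_orbitHull.1 hx
    rw [apply_zpow_apply, reverser_zpow_apply hf hpf hy, reverser_zpow_apply hf hpf hy,
      inv_apply_zpow_apply]
    congr 2; ring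
  · have hfx : f x ∉ orbitHull f p := apply_mem_orbitHull_iff.not.2 hx
    rw [reverser_of_not_mem hx, reverser_of_not_mem hfx]
    refine foldAt_apply hrev (hf.le_iff_le.symm.trans ?_)
    simpa using zpow_apply_le_iff_of_not_mem_orbitHull hf hpf hfx 1

variable [IsOrderedAddMonoid α]

theorem add_sub_mem_Icc {a b : α} (hy : y ∈ Icc a b) : a + b - y ∈ Icc a b :=
  ⟨by simpa using sub_le_sub_left hy.2 (a + b), by simpa using sub_le_sub_left hy.1 (a + b)⟩

theorem reverser_zpow_apply_mem_Icc (hf : StrictMono f) (hpf : p ≤ f p) (hy : y ∈ Ico p (f p))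
    (n : ℤ) : reverser f h p ((f ^ n) y) ∈ Icc ((f ^ (-n - 1)) p) ((f ^ (-n)) p) := by
  have hry := add_sub_mem_Icc (Ico_subset_Icc_self hy)
  have hfp : (f ^ (-n)) p = (f ^ (-n - 1)) (f p) := by rw [zpow_apply_apply, sub_add_cancel]
  rw [reverser_zpow_apply hf hpf hy, hfp]
  exact ⟨(strictMono_zpow hf _).monotone hry.1, (strictMono_zpow hf _).monotone hry.2⟩

theorem reverser_involutive (hf : StrictMono f) (hh : StrictAnti h) (hrev : Reverses h f)
    (hp : h p = p) (hpf : p ≤ f p) : Involutive (reverser f h p) := by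
  intro x
  by_cases hx : x ∈ orbitHull f p
  · obtain ⟨n, y, hy, rfl⟩ := mem_orbitHull.1 hx
    rw [reverser_zpow_apply hf hpf hy, reverser_zpow_apply_of_mem_Icc hf (hy.1.trans_lt hy.2)
      (add_sub_mem_Icc (Ico_subset_Icc_self hy))]
    simp
  · have hfold : foldAt h p x ∉ orbitHull f p :=
      (foldAt_mem_orbitHull_iff hf hh hrev hp).not.2 hx
    rw [reverser_of_not_mem hx, reverser_of_not_mem hfold, foldAt_involutive hh hp x]

theorem reverser_antitoneOn_orbitHull (hf : StrictMono f) (hpf : p ≤ f p) :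
    AntitoneOn (reverser f h p) (orbitHull f p) := by
  intro x hx x' hx' hxx'
  obtain ⟨n, y, hy, rfl⟩ := mem_orbitHull.1 hx
  obtain ⟨n', y', hy', rfl⟩ := mem_orbitHull.1 hx'
  rcases lt_trichotomy n n' with hlt | rfl | hgt
  · calc reverser f h p ((f ^ n') y') ≤ (f ^ (-n')) p :=
          (reverser_zpow_apply_mem_Icc hf hpf hy' n').2
      _ ≤ (f ^ (-n - 1)) p := monotone_zpow_apply hf hpf (by omega)
      _ ≤ _ := (reverser_zpow_apply_mem_Icc hf hpf hy n).1
  · rw [reverser_zpow_apply hf hpf hy, reverser_zpow_apply hf hpf hy']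
    exact (strictMono_zpow hf _).monotone
      (sub_le_sub_left ((strictMono_zpow hf n).le_iff_le.1 hxx') _)
  · exact absurd hxx' (zpow_apply_lt_zpow_apply hf hpf hgt hy'.2 hy.1).not_ge

theorem reverser_antitone (hf : StrictMono f) (hh : StrictAnti h) (hrev : Reverses h f)
    (hp : h p = p) (hpf : p ≤ f p) : Antitone (reverser f h p) := by
  intro x x' hxx'
  by_cases hx : x ∈ orbitHull f p <;> by_cases hx' : x' ∈ orbitHull f p
  · exact reverser_antitoneOn_orbitHull hf hpf hx hx' hxx'
  · obtain ⟨n, y, hy, rfl⟩ := mem_orbitHull.1 hx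
    have hnx' : (f ^ n) p ≤ x' := ((strictMono_zpow hf n).monotone hy.1).trans hxx'
    have hpx' : p ≤ x' := (zpow_apply_le_iff_of_not_mem_orbitHull hf hpf hx' n).1 hnx'
    have hle : (f ^ (n + 1)) p ≤ x' :=
      (zpow_apply_le_iff_of_not_mem_orbitHull hf hpf hx' _).2 hpx'
    rw [reverser_of_not_mem hx', foldAt_of_le hpx']
    calc h x' ≤ h ((f ^ (n + 1)) p) := hh.antitone hle
      _ = (f ^ (-n - 1)) p := by rw [hrev.apply_zpow_apply_of_apply_eq hp, neg_add']
      _ ≤ _ := (reverser_zpow_apply_mem_Icc hf hpf hy n).1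
  · obtain ⟨n, y, hy, rfl⟩ := mem_orbitHull.1 hx'
    have hxn : x < (f ^ (n + 1)) p :=
      hxx'.trans_lt (zpow_apply_lt_zpow_apply hf hpf (lt_add_one n) hy.2 le_rfl)
    have hxp : x < p := not_le.1 fun hpx =>
      hxn.not_ge ((zpow_apply_le_iff_of_not_mem_orbitHull hf hpf hx _).2 hpx)
    have hlt : x < (f ^ n) p := not_le.1 fun hnx =>
      hxp.not_ge ((zpow_apply_le_iff_of_not_mem_orbitHull hf hpf hx _).1 hnx)
    have hp' : h⁻¹ p = p := inv_eq_iff_eq.2 hp.symm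
    rw [reverser_of_not_mem hx, foldAt_of_lt hxp]
    calc reverser f h p ((f ^ n) y) ≤ (f ^ (-n)) p := (reverser_zpow_apply_mem_Icc hf hpf hy n).2
      _ = h⁻¹ ((f ^ n) p) := (hrev.inv.apply_zpow_apply_of_apply_eq hp' n).symm
      _ ≤ h⁻¹ x := (strictAnti_inv hh).antitone hlt.le
  · rw [reverser_of_not_mem hx, reverser_of_not_mem hx']
    exact foldAt_antitone hh hp hxx'

end Reflection

theorem exists_involution_reverses {α : Type*} [AddCommGroup α] [LinearOrder α]
    [IsOrderedAddMonoid α] {f h : Perm α} (hf : StrictMono f) (hh : StrictAnti h)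
    (hrev : Reverses h f) {p : α} (hp : h p = p) :
    ∃ σ : Perm α, σ * σ = 1 ∧ Antitone σ ∧ Reverses σ f := by
  wlog hpf : p ≤ f p generalizing f
  · have hpf' : p ≤ f⁻¹ p := by
      simpa using (Perm.strictMono_inv hf).monotone (not_le.1 hpf).le
    obtain ⟨σ, hσσ, hanti, hσf⟩ := this (Perm.strictMono_inv hf) hrev.inv_right hpf'
    exact ⟨σ, hσσ, hanti, by simpa using hσf.inv_right⟩
  have hinv := reverser_involutive hf hh hrev hp hpf
  refine ⟨hinv.toPerm _, ?_, reverser_antitone hf hh hrev hp hpf, ?_⟩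
  · ext x
    exact hinv x
  · ext x
    have := reverser_semiconj (h := h) hf hrev hpf (reverser f h p x)
    simpa [Reverses, hinv x] using this

theorem Antitone.continuous_of_surjective {α β : Type*} [LinearOrder α] [TopologicalSpace α]
    [OrderTopology α] [LinearOrder β] [TopologicalSpace β] [OrderTopology β] [DenselyOrdered β]
    {f : α → β} (hf : Antitone f) (hsurj : Surjective f) : Continuous f :=
  continuous_ofDual.comp (hf.dual_right.continuous_of_surjective (β := βᵒᵈ) hsurj)

theorem exists_fixedPt_of_antitone {α : Type*} [ConditionallyCompleteLinearOrder α]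
    [TopologicalSpace α] [OrderTopology α] [DenselyOrdered α] [Nonempty α] {h : α → α}
    (hc : Continuous h) (ha : Antitone h) : ∃ p, h p = p := by
  obtain ⟨a⟩ := ‹Nonempty α›
  rcases le_total a (h a) with ha' | ha'
  · obtain ⟨p, -, hp⟩ := exists_mem_uIcc_isFixedPt hc.continuousOn ha' (ha ha')
    exact ⟨p, hp⟩
  · obtain ⟨p, -, hp⟩ := exists_mem_uIcc_isFixedPt hc.continuousOn (ha ha') ha'
    exact ⟨p, hp⟩

theorem isHomeo_of_antitone {σ : Perm ℝ} (hσ : Antitone σ) (hσσ : σ * σ = 1) :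
    IsHomeo σ := by
  have hsymm : σ.symm = σ := inv_eq_of_mul_eq_one_right hσσ
  have hc : Continuous σ := hσ.continuous_of_surjective σ.surjective
  exact ⟨hc, by rwa [hsymm]⟩

theorem stmt_5_general (f : Equiv.Perm ℝ) (hfm : StrictMono (⇑f)) :
    (∃ σ : Equiv.Perm ℝ, IsHomeo σ ∧ σ * σ = 1 ∧ σ * f * σ = f⁻¹) ↔
    (∃ h : Equiv.Perm ℝ, IsHomeo h ∧ StrictAnti (⇑h) ∧ h * f * h⁻¹ = f⁻¹) := by
  constructor
  · rintro ⟨σ, hσ, hσσ, hσf⟩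
    rcases hσ.1.strictMono_of_inj σ.injective with hmono | hanti
    · have hσ1 : σ = 1 := Perm.eq_one_of_monotone_of_mul_self hmono.monotone hσσ
      have hf1 : f = 1 := Perm.eq_one_of_monotone_of_mul_self hfm.monotone
        (mul_eq_one_iff_eq_inv.2 (by simpa [hσ1] using hσf))
      refine ⟨Equiv.neg ℝ, ⟨continuous_neg, continuous_neg⟩, fun _ _ => neg_lt_neg, ?_⟩
      simp [hf1]
    · exact ⟨σ, hσ, hanti, by rwa [inv_eq_of_mul_eq_one_right hσσ]⟩
  · rintro ⟨h, hh, hanti, hrev⟩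
    obtain ⟨p, hp⟩ := exists_fixedPt_of_antitone hh.1 hanti.antitone
    obtain ⟨σ, hσσ, hσanti, hσf⟩ := exists_involution_reverses hfm hanti hrev hp
    refine ⟨σ, isHomeo_of_antitone hσanti hσσ, hσσ, ?_⟩
    rwa [Reverses, inv_eq_of_mul_eq_one_right hσσ] at hσf

/-- A strictly increasing homeomorphism of ℝ is strongly reversible in H(ℝ) iff it is
reversed by a strictly decreasing homeomorphism of ℝ. -/
theorem stmt_5 (f : Equiv.Perm ℝ) (hf : IsHomeo f) (hfm : StrictMono (⇑f)) :
    (∃ σ : Equiv.Perm ℝ, IsHomeo σ ∧ σ * σ = 1 ∧ σ * f * σ = f⁻¹) ↔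
    (∃ h : Equiv.Perm ℝ, IsHomeo h ∧ StrictAnti (⇑h) ∧ h * f * h⁻¹ = f⁻¹) :=
  stmt_5_general f hfm
end
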